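/- arXiv:2407.12834 — 8 statements merged into one kernel-verified Lean document; each statement's English description precedes it below -/
import Mathlib

section
/- Let Γ be a congruence subgroup of SL₂(ℤ) (i.e., Γ(N) ⊆ Γ for some positive integer N). Let f : ℍ → ℂ be a holomorphic function on the upper half-plane ℍ such that f(γτ) = f(τ) for all γ ∈ Γ and τ ∈ ℍ, and such that for every δ ∈ SL₂(ℤ) the function τ ↦ f(δτ) is bounded on the region {τ ∈ ℍ : Im τ > 1}. Then f is identically constant. -/
open scoped UpperHalfPlane Manifold MatrixGroups

open UpperHalfPlane Filter Function CongruenceSubgroup Asymptotics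

namespace Stmt1Aux

noncomputable section

local notation "I∞" => Filter.comap Complex.im Filter.atTop
local notation "𝕢" => Function.Periodic.qParam

variable {N : ℕ} {f : ℍ → ℂ}

/-- translate of `f` as a function on `ℂ`. -/
def fc (f : ℍ → ℂ) (δ : SL(2,ℤ)) : ℂ → ℂ := fun z => f (δ • ofComplex z)

lemma key (hinvN : ∀ γ ∈ Gamma N, ∀ τ : ℍ, f (γ • τ) = f τ)
    (δ γ : SL(2,ℤ)) (hγ : γ ∈ Gamma N) (τ : ℍ) : f (δ • γ • τ) = f (δ • τ) := by
  have h1 : δ • γ • τ = (δ * γ * δ⁻¹) • δ • τ := by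
    simp only [← mul_smul]
    group
  rw [h1, hinvN _ ((Gamma_normal N).conj_mem γ hγ δ)]

lemma fc_periodic (hinvN : ∀ γ ∈ Gamma N, ∀ τ : ℍ, f (γ • τ) = f τ) (δ : SL(2,ℤ)) :
    Function.Periodic (fc f δ) N := by
  intro w
  by_cases hw : 0 < w.im
  · have hw' : 0 < (w + N).im := by simp [hw]
    simp only [fc, ofComplex_apply_of_im_pos hw', ofComplex_apply_of_im_pos hw]
    have hT : (ModularGroup.T ^ (N:ℤ)) ∈ Gamma N := by
      simpa using ModularGroup_T_pow_mem_Gamma (N:ℤ) (N:ℤ) dvd_rfl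
    have hTw : (UpperHalfPlane.mk (w + N) hw') = (ModularGroup.T ^ (N:ℤ)) • (UpperHalfPlane.mk w hw) := by
      rw [modular_T_zpow_smul]
      apply UpperHalfPlane.ext
      simp [UpperHalfPlane.coe_vadd, add_comm]
    have : (⟨w + N, hw'⟩ : ℍ) = UpperHalfPlane.mk (w + N) hw' := rfl
    rw [this, hTw, key hinvN δ _ hT]
  · have h1 : (w + N).im ≤ 0 := by
      simp only [Complex.add_im, Complex.natCast_im, add_zero]
      exact not_lt.mp hw
    simp only [fc, ofComplex_apply_of_im_nonpos h1, ofComplex_apply_of_im_nonpos (not_lt.mp hw)]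

lemma fc_diff (hf : MDifferentiable 𝓘(ℂ) 𝓘(ℂ) f) (δ : SL(2,ℤ)) {z : ℂ} (hz : 0 < z.im) :
    DifferentiableAt ℂ (fc f δ) z := by
  set m : ℂ → ℂ := fun w =>
    (((δ 0 0 : ℤ) : ℂ) * w + ((δ 0 1 : ℤ) : ℂ)) / (((δ 1 0 : ℤ) : ℂ) * w + ((δ 1 1 : ℤ) : ℂ))
    with hm_def
  have hm : ∀ (w : ℂ) (hw : 0 < w.im), ((δ • (UpperHalfPlane.mk w hw) : ℍ) : ℂ) = m w := by
    intro w hw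
    rw [UpperHalfPlane.specialLinearGroup_apply]
    simp [hm_def, UpperHalfPlane.coe_mk]
  have hdenom : ∀ w : ℂ, 0 < w.im → (((δ 1 0 : ℤ) : ℂ) * w + ((δ 1 1 : ℤ) : ℂ)) ≠ 0 := by
    intro w hw h0
    have him : (((δ 1 0 : ℤ) : ℂ) * w + ((δ 1 1 : ℤ) : ℂ)).im = ((δ 1 0 : ℤ) : ℝ) * w.im := by
      simp [Complex.add_im, Complex.mul_im]
    have hc : ((δ 1 0 : ℤ) : ℝ) = 0 := by
      have := congrArg Complex.im h0
      rw [him] at this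
      simpa [hw.ne'] using this
    have hc' : (δ 1 0 : ℤ) = 0 := by exact_mod_cast hc
    have hd : ((δ 1 1 : ℤ) : ℂ) = 0 := by simpa [hc'] using h0
    have hd' : (δ 1 1 : ℤ) = 0 := by exact_mod_cast hd
    have hdet := δ.2
    rw [Matrix.det_fin_two] at hdet
    simp [hc', hd'] at hdet
  have him : 0 < (m z).im := by
    rw [← hm z hz]
    exact (δ • (UpperHalfPlane.mk z hz)).2
  have hdf : DifferentiableAt ℂ (f ∘ ofComplex) (m z) := by
    have := UpperHalfPlane.mdifferentiableAt_iff.mp (hf (UpperHalfPlane.mk (m z) him))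
    simpa using this
  have hdm : DifferentiableAt ℂ m z := by
    rw [hm_def]
    exact DifferentiableAt.div (by fun_prop) (by fun_prop) (hdenom z hz)
  have hopen : IsOpen {w : ℂ | 0 < w.im} := by
    exact isOpen_Ioi.preimage Complex.continuous_im
  have hev : (f ∘ ofComplex) ∘ m =ᶠ[nhds z] fc f δ := by
    filter_upwards [hopen.mem_nhds hz] with w hw
    have hw : 0 < w.im := hw
    have him' : 0 < (m w).im := by
      rw [← hm w hw]
      exact (δ • (UpperHalfPlane.mk w hw)).2
    simp only [fc, Function.comp_apply, ofComplex_apply_of_im_pos hw, ← hm w hw,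
      ofComplex_apply]
  exact (hdf.comp z hdm).congr_of_eventuallyEq hev.symm

lemma fc_bdd {C : ℝ} {δ : SL(2,ℤ)} (h : ∀ τ : ℍ, 1 < τ.im → ‖f (δ • τ)‖ ≤ C) :
    BoundedAtFilter I∞ (fc f δ) := by
  rw [BoundedAtFilter, Asymptotics.isBigO_iff]
  refine ⟨C, ?_⟩
  filter_upwards [Filter.preimage_mem_comap (Ioi_mem_atTop 1)] with z hz
  have hz1 : 1 < z.im := hz
  have hz0 : 0 < z.im := zero_lt_one.trans hz1
  simp only [fc, ofComplex_apply_of_im_pos hz0, Pi.one_apply, norm_one, mul_one]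
  exact h (UpperHalfPlane.mk z hz0) hz1

lemma fc_cusp_diff (hN : 0 < N) (hf : MDifferentiable 𝓘(ℂ) 𝓘(ℂ) f)
    (hinvN : ∀ γ ∈ Gamma N, ∀ τ : ℍ, f (γ • τ) = f τ)
    {C : ℝ} {δ : SL(2,ℤ)} (hC : ∀ τ : ℍ, 1 < τ.im → ‖f (δ • τ)‖ ≤ C)
    {q : ℂ} (hq : ‖q‖ < 1) :
    DifferentiableAt ℂ (Function.Periodic.cuspFunction N (fc f δ)) q := by
  have npos : 0 < (N : ℝ) := by exact_mod_cast hN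
  rcases eq_or_ne q 0 with rfl | hq'
  · exact (fc_periodic hinvN δ).differentiableAt_cuspFunction_zero npos
      (eventually_of_mem (Filter.preimage_mem_comap (Ioi_mem_atTop 0))
        (fun z hz => fc_diff hf δ hz))
      (fc_bdd hC)
  · exact Function.Periodic.qParam_right_inv npos.ne' hq' ▸
      (fc_periodic hinvN δ).differentiableAt_cuspFunction npos.ne'
        (fc_diff hf δ (Function.Periodic.im_invQParam_pos_of_norm_lt_one npos hq hq'))

lemma fc_eq_cusp (hN : 0 < N)
    (hinvN : ∀ γ ∈ Gamma N, ∀ τ : ℍ, f (γ • τ) = f τ) (δ : SL(2,ℤ)) (τ : ℍ) :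
    Function.Periodic.cuspFunction N (fc f δ) (𝕢 N ↑τ) = f (δ • τ) := by
  have hne : (N : ℝ) ≠ 0 := by positivity
  rw [Function.Periodic.eq_cuspFunction hne (fc_periodic hinvN δ) ↑τ]
  simp only [fc, ofComplex_apply]

lemma exists_bound (hN : 0 < N) (hf : MDifferentiable 𝓘(ℂ) 𝓘(ℂ) f)
    (hinvN : ∀ γ ∈ Gamma N, ∀ τ : ℍ, f (γ • τ) = f τ)
    {C : ℝ} {δ : SL(2,ℤ)} (hC : ∀ τ : ℍ, 1 < τ.im → ‖f (δ • τ)‖ ≤ C) :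
    ∃ B : ℝ,
      ((∃ τ : ℍ, ‖f (δ • τ)‖ = B) ∨
        B = ‖Function.Periodic.cuspFunction N (fc f δ) 0‖) ∧
      (∀ τ : ℍ, ‖(τ : ℂ)‖ ≤ 3 → (1:ℝ)/2 ≤ τ.im → ‖f (δ • τ)‖ ≤ B) ∧
      (∀ τ : ℍ, 2 ≤ τ.im → ‖f (δ • τ)‖ ≤ B) := by
  have npos : 0 < (N : ℝ) := by exact_mod_cast hN
  set r : ℝ := Real.exp (-2 * Real.pi * 2 / N) with hr_def
  have hr0 : 0 < r := Real.exp_pos _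
  have hr1 : r < 1 := by
    rw [hr_def, Real.exp_lt_one_iff]
    have := Real.pi_pos
    apply div_neg_of_neg_of_pos (by nlinarith) npos
  set g := Function.Periodic.cuspFunction N (fc f δ) with hg_def
  have hgd : ∀ q : ℂ, ‖q‖ < 1 → DifferentiableAt ℂ g q :=
    fun q hq => fc_cusp_diff hN hf hinvN hC hq
  obtain ⟨z₁, hz₁m, hz₁max⟩ := (isCompact_closedBall (0:ℂ) r).exists_isMaxOn
    ⟨0, Metric.mem_closedBall_self hr0.le⟩
    (continuous_norm.comp_continuousOn (fun z hz => (hgd z (by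
        have h1 : ‖z‖ ≤ r := by
          simpa [Complex.dist_eq] using hz
        exact lt_of_le_of_lt h1 hr1)).continuousAt.continuousWithinAt))
  set K : Set ℂ := {z : ℂ | ‖z‖ ≤ 3 ∧ 1/2 ≤ z.im} with hK_def
  have hKcl : IsClosed K := by
    apply IsClosed.inter
    · exact isClosed_le continuous_norm continuous_const
    · exact isClosed_le continuous_const Complex.continuous_im
  have hKb : Bornology.IsBounded K := by
    apply (Metric.isBounded_closedBall (x := (0:ℂ)) (r := 3)).subset
    intro z hz
    simpa [Complex.dist_eq] using hz.1
  have hKc : IsCompact K := Metric.isCompact_of_isClosed_isBounded hKcl hKb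
  have hKne : K.Nonempty := ⟨2 * Complex.I, by norm_num [hK_def, Complex.norm_two]⟩
  obtain ⟨z₂, hz₂m, hz₂max⟩ := hKc.exists_isMaxOn hKne
    (continuous_norm.comp_continuousOn (fun z hz =>
      (fc_diff hf δ (lt_of_lt_of_le one_half_pos hz.2)).continuousAt.continuousWithinAt))
  have him₂ : 0 < z₂.im := lt_of_lt_of_le one_half_pos hz₂m.2
  refine ⟨max (‖g z₁‖) (‖fc f δ z₂‖), ?_, ?_, ?_⟩
  · rcases max_choice (‖g z₁‖) (‖fc f δ z₂‖) with h | h <;> rw [h]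
    · rcases eq_or_ne z₁ 0 with rfl | hz₁0
      · exact Or.inr rfl
      · left
        have habs : ‖z₁‖ < 1 := by
          have h1 : ‖z₁‖ ≤ r := by simpa [Complex.dist_eq] using hz₁m
          exact lt_of_le_of_lt h1 hr1
        have himq := Function.Periodic.im_invQParam_pos_of_norm_lt_one npos habs hz₁0
        refine ⟨UpperHalfPlane.mk _ himq, ?_⟩
        rw [← fc_eq_cusp hN hinvN δ (UpperHalfPlane.mk _ himq)]
        congr 1
        rw [hg_def]
        congr 1
        rw [UpperHalfPlane.coe_mk]
        exact Function.Periodic.qParam_right_inv npos.ne' hz₁0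
    · left
      refine ⟨UpperHalfPlane.mk z₂ him₂, ?_⟩
      simp only [fc, ofComplex_apply_of_im_pos him₂]
  · intro τ h3 hhalf
    have hmem : (τ : ℂ) ∈ K := ⟨h3, hhalf⟩
    have := hz₂max hmem
    have heq : fc f δ (τ : ℂ) = f (δ • τ) := by simp only [fc, ofComplex_apply]
    simp only [Set.mem_setOf_eq, Function.comp_apply, heq] at this
    exact le_trans this (le_max_right _ _)
  · intro τ h2
    have hqmem : 𝕢 N (τ : ℂ) ∈ Metric.closedBall (0:ℂ) r := by
      rw [Metric.mem_closedBall, Complex.dist_eq, sub_zero, Function.Periodic.norm_qParam]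
      rw [hr_def, Real.exp_le_exp, div_le_div_iff_of_pos_right npos]
      have hπ := Real.pi_pos
      have h2' : (2:ℝ) ≤ (τ : ℂ).im := by
        simpa [UpperHalfPlane.coe_im] using h2
      nlinarith
    have := hz₁max hqmem
    simp only [Function.comp_apply] at this
    rw [← fc_eq_cusp hN hinvN δ τ, ← hg_def]
    exact le_trans this (le_max_left _ _)

end

end Stmt1Aux

open UpperHalfPlane Filter CongruenceSubgroup Stmt1Aux in
/-- A weight-0 modular function for a congruence subgroup `Γ ≤ SL(2,ℤ)` which is holomorphic on
`ℍ` and bounded near every cusp is constant. -/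
theorem stmt1 (Γ : Subgroup (Matrix.SpecialLinearGroup (Fin 2) ℤ))
    (N : ℕ) (hN : 0 < N) (hΓ : CongruenceSubgroup.Gamma N ≤ Γ)
    (f : ℍ → ℂ) (hf : MDifferentiable 𝓘(ℂ) 𝓘(ℂ) f)
    (hinv : ∀ γ ∈ Γ, ∀ τ : ℍ, f (γ • τ) = f τ)
    (hbdd : ∀ δ : Matrix.SpecialLinearGroup (Fin 2) ℤ, ∃ C : ℝ, ∀ τ : ℍ,
      1 < τ.im → ‖f (δ • τ)‖ ≤ C) :
    ∃ c : ℂ, ∀ τ : ℍ, f τ = c := by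
  haveI : NeZero N := ⟨hN.ne'⟩
  have npos : 0 < (N : ℝ) := by exact_mod_cast hN
  have hinvN : ∀ γ ∈ CongruenceSubgroup.Gamma N, ∀ τ : ℍ, f (γ • τ) = f τ :=
    fun γ hγ τ => hinv γ (hΓ hγ) τ
  haveI : Finite (SL(2,ℤ) ⧸ CongruenceSubgroup.Gamma N) :=
    Finite.of_equiv _ (QuotientGroup.quotientKerEquivRange
      (Matrix.SpecialLinearGroup.map (n := Fin 2) (Int.castRingHom (ZMod N)))).symm.toEquiv
  haveI : Nonempty (SL(2,ℤ) ⧸ CongruenceSubgroup.Gamma N) := ⟨QuotientGroup.mk 1⟩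
  have HB : ∀ q : SL(2,ℤ) ⧸ CongruenceSubgroup.Gamma N, ∃ B : ℝ,
      ((∃ τ : ℍ, ‖f (q.out • τ)‖ = B) ∨
        B = ‖Function.Periodic.cuspFunction N (fc f q.out) 0‖) ∧
      (∀ τ : ℍ, ‖(τ : ℂ)‖ ≤ 3 → (1:ℝ)/2 ≤ τ.im → ‖f (q.out • τ)‖ ≤ B) ∧
      (∀ τ : ℍ, 2 ≤ τ.im → ‖f (q.out • τ)‖ ≤ B) := by
    intro q
    obtain ⟨C, hC⟩ := hbdd q.out
    exact exists_bound hN hf hinvN hC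
  choose B hB1 hB2 hB3 using HB
  have hcoset : ∀ (δ : SL(2,ℤ)) (τ : ℍ),
      f ((QuotientGroup.mk δ : SL(2,ℤ) ⧸ CongruenceSubgroup.Gamma N).out • τ) = f (δ • τ) := by
    intro δ τ
    obtain ⟨h, hh⟩ := QuotientGroup.mk_out_eq_mul (CongruenceSubgroup.Gamma N) δ
    rw [hh, mul_smul]
    exact key hinvN δ h h.2 τ
  obtain ⟨qm, hqm⟩ := Finite.exists_max B
  have hglob : ∀ τ : ℍ, ‖f τ‖ ≤ B qm := by
    intro τ
    obtain ⟨γ, hγ⟩ := ModularGroup.exists_smul_mem_fd τ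
    set σ := γ • τ with hσ
    have hτσ : f τ = f ((QuotientGroup.mk γ⁻¹ : SL(2,ℤ) ⧸ CongruenceSubgroup.Gamma N).out • σ) := by
      rw [hcoset, hσ, inv_smul_smul]
    obtain ⟨h1, h2⟩ := hγ
    rw [hτσ]
    have himpos : 0 < σ.im := σ.im_pos
    have hre2 : σ.re^2 ≤ (1/2)^2 := by
      have h2' := abs_le.mp h2
      nlinarith [h2'.1, h2'.2]
    have hnormsq : σ.re^2 + σ.im^2 = Complex.normSq (σ : ℂ) := by
      rw [Complex.normSq_apply, UpperHalfPlane.coe_re, UpperHalfPlane.coe_im]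
      ring
    have hhalf : (1:ℝ)/2 ≤ σ.im := by nlinarith
    rcases le_or_gt σ.im 2 with him | him
    · have habs3 : ‖(σ : ℂ)‖ ≤ 3 := by
        calc ‖(σ : ℂ)‖ ≤ |(σ:ℂ).re| + |(σ:ℂ).im| :=
              Complex.norm_le_abs_re_add_abs_im (σ : ℂ)
        _ ≤ 1/2 + 2 := by
              apply add_le_add
              · simpa [UpperHalfPlane.coe_re] using h2
              · rw [UpperHalfPlane.coe_im, abs_of_pos himpos]
                exact him
        _ ≤ 3 := by norm_num
      exact le_trans (hB2 _ σ habs3 hhalf) (hqm _)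
    · exact le_trans (hB3 _ σ him.le) (hqm _)
  rcases hB1 qm with ⟨τstar, hτstar⟩ | hcusp
  · set τ₀ := qm.out • τstar with hτ₀
    have hop : IsOpen {z : ℂ | 0 < z.im} := isOpen_Ioi.preimage Complex.continuous_im
    have hmax : IsMaxOn (norm ∘ (f ∘ ofComplex)) {z : ℂ | 0 < z.im} (τ₀ : ℂ) := by
      intro z hz
      have hz' : 0 < z.im := hz
      show ‖f (ofComplex z)‖ ≤ ‖f (ofComplex (τ₀ : ℂ))‖
      calc ‖f (ofComplex z)‖ ≤ B qm := by
            rw [ofComplex_apply_of_im_pos hz']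
            exact hglob _
      _ = ‖f τ₀‖ := hτstar.symm
      _ = ‖f (ofComplex (τ₀ : ℂ))‖ := by rw [ofComplex_apply]
    have hcon : IsPreconnected {z : ℂ | 0 < z.im} := (convex_halfSpace_im_gt 0).isPreconnected
    have hdiffOn := UpperHalfPlane.mdifferentiable_iff.mp hf
    have hmem₀ : (τ₀ : ℂ) ∈ {z : ℂ | 0 < z.im} := by
      simpa [Set.mem_setOf_eq, UpperHalfPlane.coe_im] using τ₀.im_pos
    have heq := Complex.eqOn_of_isPreconnected_of_isMaxOn_norm hcon hop hdiffOn hmem₀ hmax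
    refine ⟨f τ₀, fun τ => ?_⟩
    have hmemτ : (τ : ℂ) ∈ {z : ℂ | 0 < z.im} := by
      simpa [Set.mem_setOf_eq, UpperHalfPlane.coe_im] using τ.im_pos
    have := heq hmemτ
    simpa [Function.comp_apply, ofComplex_apply, Function.const] using this
  · set g := Function.Periodic.cuspFunction N (fc f qm.out) with hg
    obtain ⟨C, hC⟩ := hbdd qm.out
    have hgd : ∀ q : ℂ, ‖q‖ < 1 → DifferentiableAt ℂ g q :=
      fun q hq => fc_cusp_diff hN hf hinvN hC hq
    have hmax : IsMaxOn (norm ∘ g) (Metric.ball (0:ℂ) 1) 0 := by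
      intro q hq
      show ‖g q‖ ≤ ‖g 0‖
      rcases eq_or_ne q 0 with rfl | hq0
      · exact le_refl _
      · have habs : ‖q‖ < 1 := by
          simpa [Complex.dist_eq] using hq
        have himq := Function.Periodic.im_invQParam_pos_of_norm_lt_one npos habs hq0
        have hgq : g q = f (qm.out • UpperHalfPlane.mk _ himq) := by
          rw [← fc_eq_cusp hN hinvN qm.out (UpperHalfPlane.mk _ himq), hg]
          congr 1
          rw [UpperHalfPlane.coe_mk]
          exact (Function.Periodic.qParam_right_inv npos.ne' hq0).symm
        rw [hgq, ← hcusp]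
        exact hglob _
    have heq := Complex.eqOn_of_isPreconnected_of_isMaxOn_norm
      (convex_ball (0:ℂ) 1).isPreconnected Metric.isOpen_ball
      (fun q hq => (hgd q (by simpa [Complex.dist_eq] using hq)).differentiableWithinAt)
      (Metric.mem_ball_self one_pos) hmax
    refine ⟨g 0, fun τ => ?_⟩
    have hτq : Function.Periodic.qParam N ((qm.out⁻¹ • τ : ℍ) : ℂ) ∈ Metric.ball (0:ℂ) 1 := by
      rw [Metric.mem_ball, Complex.dist_eq, sub_zero, Function.Periodic.norm_qParam]
      rw [← Real.exp_zero, Real.exp_lt_exp]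
      have hπ := Real.pi_pos
      have him := (qm.out⁻¹ • τ : ℍ).im_pos
      rw [UpperHalfPlane.coe_im]
      exact div_neg_of_neg_of_pos (by nlinarith) npos
    have h1 : f τ = f (qm.out • (qm.out⁻¹ • τ)) := by rw [smul_inv_smul]
    rw [h1, ← fc_eq_cusp hN hinvN qm.out (qm.out⁻¹ • τ), ← hg]
    have := heq hτq
    simpa [Function.const] using this
end

section
/- Let N be a positive integer. For each pair of integers (ℓ, m) with m | N, m > 0, 0 ≤ ℓ < gcd(m, N/m), and gcd(ℓ, gcd(m, N/m)) = 1, fix an integer α_{ℓ,m} with α_{ℓ,m} ≡ ℓ (mod gcd(m, N/m)) and gcd(α_{ℓ,m}, m) = 1. Then every point of ℙ¹(ℚ) = ℚ ∪ {∞} is Γ₀(N)-equivalent (under the Möbius action) to the cusp α_{ℓ,m}/m for exactly one such pair (ℓ, m). -/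
lemma cusp_invariant (N : ℕ) (γ : Matrix.SpecialLinearGroup (Fin 2) ℤ)
    (hγ : γ ∈ CongruenceSubgroup.Gamma0 N)
    (A m' p' q' : ℤ) (hm'pos : 0 < m') (hm'N : m' ∣ (N : ℤ))
    (hmv : (γ : Matrix (Fin 2) (Fin 2) ℤ).mulVec ![A, m'] = ![p', q']) :
    (Int.gcd q' N : ℤ) = m' ∧
      (Int.gcd m' ((N : ℤ) / m') : ℤ) ∣ p' * (q' / m') - A := by
  set a := (γ : Matrix (Fin 2) (Fin 2) ℤ) 0 0 with ha
  set b := (γ : Matrix (Fin 2) (Fin 2) ℤ) 0 1 with hb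
  set c := (γ : Matrix (Fin 2) (Fin 2) ℤ) 1 0 with hc
  set d := (γ : Matrix (Fin 2) (Fin 2) ℤ) 1 1 with hd
  have hdet : a * d - b * c = 1 := by
    have := γ.2
    rw [Matrix.det_fin_two] at this
    linarith
  have hNc : (N : ℤ) ∣ c := by
    have := CongruenceSubgroup.Gamma0_mem.mp hγ
    exact (ZMod.intCast_zmod_eq_zero_iff_dvd c N).mp this
  obtain ⟨k, hk⟩ := hNc
  have eq0 : a * A + b * m' = p' := by
    have := congrFun hmv 0
    simpa [Matrix.mulVec, dotProduct, Fin.sum_univ_two] using this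
  have eq1 : c * A + d * m' = q' := by
    have := congrFun hmv 1
    simpa [Matrix.mulVec, dotProduct, Fin.sum_univ_two] using this
  have hdN : IsCoprime d (N : ℤ) := ⟨a, -(b * k), by linear_combination hdet + b * hk⟩
  set n₁ := (N : ℤ) / m' with hn₁
  have hNmn : (N : ℤ) = m' * n₁ := (Int.mul_ediv_cancel' hm'N).symm
  have hm'q' : m' ∣ q' := by
    rw [← eq1, hk]
    exact dvd_add (((hm'N.mul_right k)).mul_right A) (dvd_mul_left m' d)
  have hgcd : (Int.gcd q' N : ℤ) = m' := by
    apply Int.dvd_antisymm (by positivity) hm'pos.le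
    · have he1 : (Int.gcd q' N : ℤ) ∣ d * m' := by
        have h : d * m' = q' - (N : ℤ) * k * A := by linear_combination eq1 - A * hk
        rw [h]
        exact dvd_sub (Int.gcd_dvd_left _ _) (((Int.gcd_dvd_right _ _).mul_right k).mul_right A)
      have hcop : IsCoprime ((Int.gcd q' N : ℤ)) d :=
        hdN.symm.of_isCoprime_of_dvd_left (Int.gcd_dvd_right _ _)
      exact hcop.dvd_of_dvd_mul_left he1
    · exact Int.dvd_coe_gcd hm'q' hm'N
  refine ⟨hgcd, ?_⟩
  set q₁ := q' / m' with hq₁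
  have hq' : q' = m' * q₁ := (Int.mul_ediv_cancel' hm'q').symm
  have eqq : q₁ = n₁ * k * A + d := by
    have h2 : m' * q₁ = m' * (n₁ * k * A + d) := by
      rw [← hq', ← eq1, hk, hNmn]; ring
    exact mul_left_cancel₀ hm'pos.ne' h2
  have key : p' * q₁ - A = n₁ * (k * A * p') + m' * (d * b + A * b * n₁ * k) := by
    linear_combination p' * eqq - d * eq0 + A * hdet + A * b * hk + A * b * k * hNmn
  rw [key]
  exact dvd_add ((Int.gcd_dvd_right _ _).mul_right _) ((Int.gcd_dvd_left _ _).mul_right _)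

/-- Iwaniec's set of inequivalent cusps for `Γ₀(N)`: representing a point of `ℙ¹(ℚ)` by a coprime
integer vector `(p, q)` (determined up to sign), every point of `ℙ¹(ℚ)` is `Γ₀(N)`-equivalent to
the cusp `α_{ℓ,m}/m` for exactly one pair `(ℓ, m)` with `m ∣ N`, `0 ≤ ℓ < gcd(m, N/m)` and
`gcd(ℓ, gcd(m, N/m)) = 1`. -/
theorem stmt3 (N : ℕ) (hN : 0 < N) (α : ℤ → ℤ → ℤ)
    (hrep : ∀ l m : ℤ, 0 < m → m ∣ (N : ℤ) → 0 ≤ l → l < (Int.gcd m ((N : ℤ) / m) : ℤ) →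
      Int.gcd l (Int.gcd m ((N : ℤ) / m)) = 1 →
      α l m ≡ l [ZMOD ((Int.gcd m ((N : ℤ) / m) : ℤ))] ∧ Int.gcd (α l m) m = 1) :
    ∀ p q : ℤ, IsCoprime p q →
      ∃! lm : ℤ × ℤ,
        (0 < lm.2 ∧ lm.2 ∣ (N : ℤ) ∧ 0 ≤ lm.1 ∧
          lm.1 < (Int.gcd lm.2 ((N : ℤ) / lm.2) : ℤ) ∧
          Int.gcd lm.1 (Int.gcd lm.2 ((N : ℤ) / lm.2)) = 1) ∧
        ∃ γ ∈ CongruenceSubgroup.Gamma0 N,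
          (γ : Matrix (Fin 2) (Fin 2) ℤ).mulVec ![α lm.1 lm.2, lm.2] = ![p, q] ∨
          (γ : Matrix (Fin 2) (Fin 2) ℤ).mulVec ![α lm.1 lm.2, lm.2] = -![p, q] := by
  intro p q hpq
  have hNne : (N : ℤ) ≠ 0 := by exact_mod_cast hN.ne'
  set m : ℤ := (Int.gcd q N : ℤ) with hm_def
  have hmpos : 0 < m := by
    rw [hm_def]
    exact_mod_cast Int.gcd_pos_iff.mpr (Or.inr hNne)
  have hmN : m ∣ (N : ℤ) := Int.gcd_dvd_right q N
  have hmq : m ∣ q := Int.gcd_dvd_left q N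
  set n₁ : ℤ := (N : ℤ) / m with hn₁_def
  have hNmn : (N : ℤ) = m * n₁ := (Int.mul_ediv_cancel' hmN).symm
  set q₁ : ℤ := q / m with hq₁_def
  have hq : q = m * q₁ := (Int.mul_ediv_cancel' hmq).symm
  set g : ℤ := (Int.gcd m n₁ : ℤ) with hg_def
  have hgpos : 0 < g := by
    rw [hg_def]
    exact_mod_cast Int.gcd_pos_iff.mpr (Or.inl hmpos.ne')
  have hgm : g ∣ m := Int.gcd_dvd_left m n₁
  have hgn : g ∣ n₁ := Int.gcd_dvd_right m n₁
  -- q₁ coprime to n₁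
  have hq₁n₁ : IsCoprime q₁ n₁ := by
    rw [Int.isCoprime_iff_gcd_eq_one]
    have h1 : Int.gcd (m * q₁) (m * n₁) = m.natAbs * Int.gcd q₁ n₁ := Int.gcd_mul_left m q₁ n₁
    rw [← hq, ← hNmn] at h1
    have h2 : (m.natAbs : ℤ) = m := Int.natAbs_of_nonneg hmpos.le
    have h3 : m.natAbs * Int.gcd q₁ n₁ = m.natAbs * 1 := by
      rw [mul_one, ← h1]; exact_mod_cast hm_def.symm ▸ congrArg Int.natAbs h2
    have hne : m.natAbs ≠ 0 := by
      intro h; rw [Int.natAbs_eq_zero] at h; exact hmpos.ne' h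
    exact Nat.eq_of_mul_eq_mul_left (Nat.pos_of_ne_zero hne) h3
  have hpm : IsCoprime p m := hpq.of_isCoprime_of_dvd_right hmq
  have hpg : IsCoprime p g := hpm.of_isCoprime_of_dvd_right hgm
  have hq₁g : IsCoprime q₁ g := hq₁n₁.of_isCoprime_of_dvd_right hgn
  set l : ℤ := (p * q₁) % g with hl_def
  have hl0 : 0 ≤ l := Int.emod_nonneg _ hgpos.ne'
  have hlg : l < g := Int.emod_lt_of_pos _ hgpos
  have hlmod : g ∣ p * q₁ - l := by
    rw [hl_def, Int.emod_def]
    exact ⟨p * q₁ / g, by ring⟩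
  have hlgcd : Int.gcd l g = 1 := by
    rw [← Int.isCoprime_iff_gcd_eq_one]
    have h1 : IsCoprime (p * q₁) g := hpg.mul_left hq₁g
    have : l = p * q₁ + g * (-(p * q₁ / g)) := by rw [hl_def, Int.emod_def]; ring
    rw [this]
    exact h1.add_mul_left_left _
  obtain ⟨hαmod, hαcop⟩ := hrep l m hmpos hmN hl0 hlg hlgcd
  set A := α l m with hA_def
  have hAm : IsCoprime A m := Int.isCoprime_iff_gcd_eq_one.mpr hαcop
  have hAl : g ∣ A - l := Int.ModEq.dvd hαmod.symm
  have hApq : g ∣ p * q₁ - A := by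
    have h : p * q₁ - A = (p * q₁ - l) - (A - l) := by ring
    rw [h]; exact dvd_sub hlmod hAl
  -- Bezout for A, m scaled by p
  obtain ⟨a₀, b₀, hab⟩ := hAm
  -- a₀, b₀ with a₀ * A + b₀ * m = p  (after scaling)
  set a₀' := p * a₀ with ha₀'
  set b₀' := p * b₀ with hb₀'
  have hab' : a₀' * A + b₀' * m = p := by
    rw [ha₀', hb₀']; linear_combination p * hab
  -- key divisibility : g ∣ 1 - a₀' * q₁
  have hkey : g ∣ 1 - a₀' * q₁ := by
    have h1 : g ∣ p - a₀' * A := by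
      have h : p - a₀' * A = b₀' * m := by linear_combination -hab'
      rw [h]; exact hgm.mul_left b₀'
    have h2 : g ∣ p * (1 - a₀' * q₁) := by
      have h : p * (1 - a₀' * q₁) = (p - a₀' * A) + a₀' * (A - p * q₁) := by ring
      rw [h]
      exact dvd_add h1 ((dvd_sub_comm.mp hApq).mul_left a₀')
    exact (hpg.symm).dvd_of_dvd_mul_left h2
  -- gcd (q, n₁ * p) divides g
  have hgcd_dvd : (Int.gcd q (n₁ * p) : ℤ) ∣ g := by
    set e : ℤ := (Int.gcd q (n₁ * p) : ℤ) with he_def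
    have heq : e ∣ q := Int.gcd_dvd_left q (n₁ * p)
    have henp : e ∣ n₁ * p := Int.gcd_dvd_right q (n₁ * p)
    have hep : IsCoprime e p := hpq.symm.of_isCoprime_of_dvd_left heq
    have hen : e ∣ n₁ := hep.dvd_of_dvd_mul_right henp
    have heq₁ : IsCoprime e q₁ := hq₁n₁.symm.of_isCoprime_of_dvd_left hen
    have hem : e ∣ m := by
      have : e ∣ m * q₁ := hq ▸ heq
      exact heq₁.dvd_of_dvd_mul_left (by rwa [mul_comm] at this)
    exact Int.dvd_coe_gcd hem hen
  -- solve t * q + (n₁ * p) * s = 1 - a₀' * q₁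
  obtain ⟨k, hk⟩ : (Int.gcd q (n₁ * p) : ℤ) ∣ 1 - a₀' * q₁ := hgcd_dvd.trans hkey
  set t : ℤ := Int.gcdA q (n₁ * p) * k with ht_def
  set s : ℤ := Int.gcdB q (n₁ * p) * k with hs_def
  have hts : t * q + (n₁ * p) * s = 1 - a₀' * q₁ := by
    rw [ht_def, hs_def, hk]
    have := Int.gcd_eq_gcd_ab q (n₁ * p)
    linear_combination (-k) * this
  -- the matrix
  set a : ℤ := a₀' + t * m with ha_def
  set b : ℤ := b₀' - t * A with hb_def2
  set c : ℤ := m * n₁ * (-s) with hc_def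
  set d : ℤ := q₁ - n₁ * (-s) * A with hd_def
  have hdet : a * d - b * c = 1 := by
    rw [ha_def, hb_def2, hc_def, hd_def]
    linear_combination (-(n₁ * (-s))) * hab' + hts - t * hq
  -- build γ
  have hcZ : ((c : ℤ) : ZMod N) = 0 := by
    have : c = (N : ℤ) * (-s) := by rw [hc_def, hNmn]
    rw [this]
    push_cast
    simp
  set γ : Matrix.SpecialLinearGroup (Fin 2) ℤ :=
    ⟨!![a, b; c, d], by rw [Matrix.det_fin_two_of]; linarith [hdet]⟩ with hγ_def
  have hγmem : γ ∈ CongruenceSubgroup.Gamma0 N := by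
    rw [CongruenceSubgroup.Gamma0_mem]
    simpa [hγ_def] using hcZ
  have hmv : (γ : Matrix (Fin 2) (Fin 2) ℤ).mulVec ![A, m] = ![p, q] := by
    funext i
    fin_cases i
    · simp only [hγ_def, Fin.mk_zero, Fin.mk_one, Matrix.mulVec, dotProduct,
        Fin.sum_univ_two]
      simp only [Matrix.of_apply, Matrix.cons_val', Matrix.cons_val_zero, Matrix.cons_val_one,
        Matrix.head_cons, Matrix.head_fin_const, Matrix.empty_val', Matrix.cons_val_fin_one]
      rw [ha_def, hb_def2]
      linear_combination hab'
    · simp only [hγ_def, Fin.mk_zero, Fin.mk_one, Matrix.mulVec, dotProduct,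
        Fin.sum_univ_two]
      simp only [Matrix.of_apply, Matrix.cons_val', Matrix.cons_val_zero, Matrix.cons_val_one,
        Matrix.head_cons, Matrix.head_fin_const, Matrix.empty_val', Matrix.cons_val_fin_one]
      rw [hc_def, hd_def]
      linear_combination -hq
  refine ⟨(l, m), ⟨⟨hmpos, hmN, hl0, hlg, hlgcd⟩, γ, hγmem, Or.inl hmv⟩, ?_⟩
  rintro ⟨l', m'⟩ ⟨⟨hm'pos, hm'N, hl'0, hl'g, hl'gcd⟩, γ', hγ'mem, hcase⟩
  obtain ⟨hα'mod, hα'cop⟩ := hrep l' m' hm'pos hm'N hl'0 hl'g hl'gcd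
  have hinv : (Int.gcd q N : ℤ) = m' ∧
      (Int.gcd m' ((N : ℤ) / m') : ℤ) ∣ p * (q / m') - α l' m' := by
    rcases hcase with hc | hc
    · exact cusp_invariant N γ' hγ'mem _ m' p q hm'pos hm'N hc
    · have hc' : (γ' : Matrix (Fin 2) (Fin 2) ℤ).mulVec ![α l' m', m'] = ![-p, -q] := by
        rw [hc]; funext i; fin_cases i <;> simp
      obtain ⟨h1, h2⟩ := cusp_invariant N γ' hγ'mem _ m' (-p) (-q) hm'pos hm'N hc'
      have h1' : (Int.gcd q N : ℤ) = m' := by rwa [Int.neg_gcd] at h1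
      have hm'q : m' ∣ q := h1' ▸ Int.gcd_dvd_left q (N : ℤ)
      refine ⟨h1', ?_⟩
      rw [Int.neg_ediv_of_dvd hm'q, neg_mul_neg] at h2
      exact h2
  obtain ⟨h1, h2⟩ := hinv
  have hm'm : m' = m := by rw [hm_def]; exact h1.symm
  rw [hm'm] at h2 hl'g hl'gcd hα'mod
  have hgA' : g ∣ p * q₁ - α l' m := h2
  have hl'g' : l' < g := hl'g
  have hl'A : g ∣ α l' m - l' := Int.ModEq.dvd hα'mod.symm
  have hll' : g ∣ l' - l := by
    have h : l' - l = (p * q₁ - l) - (p * q₁ - α l' m) - (α l' m - l') := by ring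
    rw [h]; exact dvd_sub (dvd_sub hlmod hgA') hl'A
  have hl'eq : l' = l := by
    have e1 : l' % g = l' := Int.emod_eq_of_lt hl'0 hl'g'
    have e2 : l % g = l := Int.emod_eq_of_lt hl0 hlg
    have e3 : l' % g = l % g :=
      Int.emod_eq_emod_iff_emod_sub_eq_zero.mpr (Int.emod_eq_zero_of_dvd hll')
    rw [← e1, e3, e2]
  exact Prod.ext hl'eq hm'm
end

section
/- Let M = [[a,b],[c,d]] be a 2×2 integer matrix with det M = n > 0, and let α, β be coprime integers (not both zero). Let γ, γ' ∈ SL₂(ℤ) be matrices such that γ·∞ = α/β and γ'·∞ = M·(α/β) under the Möbius action on ℙ¹(ℚ). Then the matrix (γ')^{-1} M γ is upper-triangular, say (γ')^{-1} M γ = [[A, B],[0, D]], with A·D = n, and |A| = gcd(aα + bβ, cα + dβ). -/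
/-- If `γ∞ = α/β` and `γ'∞ = M(α/β)` (cusps represented by coprime integer vectors up to sign,
and `M(α/β)` by the nonzero vector `M·(α,β)`), then `(γ')⁻¹Mγ` is upper triangular,
say `[[A,B],[0,D]]`, with `A·D = n` and `|A| = gcd(aα+bβ, cα+dβ)`. -/
theorem stmt5 (n : ℤ) (hn : 0 < n) (M : Matrix (Fin 2) (Fin 2) ℤ) (hdet : M.det = n)
    (α β : ℤ) (hαβ : IsCoprime α β)
    (γ γ' : Matrix.SpecialLinearGroup (Fin 2) ℤ)
    (hγ : (γ : Matrix (Fin 2) (Fin 2) ℤ).mulVec ![1, 0] = ![α, β] ∨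
      (γ : Matrix (Fin 2) (Fin 2) ℤ).mulVec ![1, 0] = -![α, β])
    (hγ' : ∃ k : ℤ, k ≠ 0 ∧
      M.mulVec ![α, β] = k • ((γ' : Matrix (Fin 2) (Fin 2) ℤ).mulVec ![1, 0]))
    (P : Matrix (Fin 2) (Fin 2) ℤ)
    (hP : P = ((γ'⁻¹ : Matrix.SpecialLinearGroup (Fin 2) ℤ) : Matrix (Fin 2) (Fin 2) ℤ) * M *
      (γ : Matrix (Fin 2) (Fin 2) ℤ)) :
    P 1 0 = 0 ∧ P 0 0 * P 1 1 = n ∧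
      (P 0 0).natAbs = Int.gcd (M 0 0 * α + M 0 1 * β) (M 1 0 * α + M 1 1 * β) := by
  obtain ⟨k, hk, hkv⟩ := hγ'
  set a := M 0 0; set b := M 0 1; set c := M 1 0; set d := M 1 1
  have hMdet : a * d - b * c = n := by
    rw [← hdet, Matrix.det_fin_two]
  set p := (γ : Matrix (Fin 2) (Fin 2) ℤ) 0 0
  set q := (γ : Matrix (Fin 2) (Fin 2) ℤ) 0 1
  set r := (γ : Matrix (Fin 2) (Fin 2) ℤ) 1 0
  set s := (γ : Matrix (Fin 2) (Fin 2) ℤ) 1 1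
  set p' := (γ' : Matrix (Fin 2) (Fin 2) ℤ) 0 0
  set q' := (γ' : Matrix (Fin 2) (Fin 2) ℤ) 0 1
  set r' := (γ' : Matrix (Fin 2) (Fin 2) ℤ) 1 0
  set s' := (γ' : Matrix (Fin 2) (Fin 2) ℤ) 1 1
  have hγdet : p * s - q * r = 1 := by
    have := γ.2; rwa [Matrix.det_fin_two] at this
  have hγ'det : p' * s' - q' * r' = 1 := by
    have := γ'.2; rwa [Matrix.det_fin_two] at this
  have hk0 : a * α + b * β = k * p' := by
    have := congrFun hkv 0
    simpa [Matrix.mulVec, dotProduct, Fin.sum_univ_two, mul_comm] using this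
  have hk1 : c * α + d * β = k * r' := by
    have := congrFun hkv 1
    simpa [Matrix.mulVec, dotProduct, Fin.sum_univ_two, mul_comm] using this
  -- inverse of γ'
  have hinv : ((γ'⁻¹ : Matrix.SpecialLinearGroup (Fin 2) ℤ) : Matrix (Fin 2) (Fin 2) ℤ)
      = !![s', -q'; -r', p'] := by
    rw [Matrix.SpecialLinearGroup.SL2_inv_expl]
    ext i j
    fin_cases i <;> fin_cases j <;> rfl
  -- entries of P
  have hP10 : P 1 0 = (-r' * a + p' * c) * p + (-r' * b + p' * d) * r := by
    rw [hP, hinv]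
    simp [Matrix.mul_apply, Fin.sum_univ_two, Matrix.vecMul, dotProduct]
    try ring
  have hP00 : P 0 0 = (s' * a - q' * c) * p + (s' * b - q' * d) * r := by
    rw [hP, hinv]
    simp [Matrix.mul_apply, Fin.sum_univ_two, Matrix.vecMul, dotProduct]
    try ring
  -- from hγ : p = ±α, r = ±β  (as one equation avoiding cases: use ε)
  obtain ⟨ε, hε, hpα, hrβ⟩ : ∃ ε : ℤ, ε * ε = 1 ∧ p = ε * α ∧ r = ε * β := by
    rcases hγ with h | h
    · have h0 := congrFun h 0
      have h1 := congrFun h 1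
      simp [Matrix.mulVec, dotProduct, Fin.sum_univ_two] at h0 h1
      exact ⟨1, by ring, by linarith [h0], by linarith [h1]⟩
    · have h0 := congrFun h 0
      have h1 := congrFun h 1
      simp [Matrix.mulVec, dotProduct, Fin.sum_univ_two] at h0 h1
      exact ⟨-1, by ring, by linarith [h0], by linarith [h1]⟩
  have key10 : P 1 0 = 0 := by
    rw [hP10, hpα, hrβ]
    have : -r' * (a * α + b * β) + p' * (c * α + d * β) = 0 := by
      rw [hk0, hk1]; ring
    linear_combination ε * this
  have key00 : P 0 0 = ε * k := by
    rw [hP00, hpα, hrβ]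
    have : s' * (a * α + b * β) - q' * (c * α + d * β) = k := by
      rw [hk0, hk1]; linear_combination k * hγ'det
    linear_combination ε * this
  refine ⟨key10, ?_, ?_⟩
  · have hPdet : P.det = n := by
      rw [hP, Matrix.det_mul, Matrix.det_mul,
        Matrix.SpecialLinearGroup.det_coe, Matrix.SpecialLinearGroup.det_coe, hdet]
      ring
    rw [Matrix.det_fin_two, key10] at hPdet
    linear_combination hPdet
  · rw [key00, hk0, hk1]
    have hcop : Int.gcd p' r' = 1 := by
      have : IsCoprime p' r' := ⟨s', -q', by linarith [hγ'det]⟩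
      exact Int.isCoprime_iff_gcd_eq_one.mp this
    rw [Int.gcd_mul_left, hcop, mul_one, Int.natAbs_mul]
    rcases Int.isUnit_iff.mp (IsUnit.of_mul_eq_one (a := ε) ε hε) with h | h <;> simp [h]
end

section
/- Let N and c be positive integers with N | c, let λ := gcd(N, c/N), and let m be an integer with gcd(m, N) = 1. Then the number of integers a with 1 ≤ a ≤ c, a ≡ m (mod N), and gcd(a, c/N) = 1 equals λ·φ(c/N)/φ(λ); that is, φ(λ) · #{a ∈ [1,c] : a ≡ m (mod N), gcd(a, c/N) = 1} = λ·φ(c/N). -/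
open Finset

private lemma fiber_card_aux {G H : Type*} [Group G] [Fintype G] [Group H] [Fintype H]
    [DecidableEq H] (f : G →* H) (hf : Function.Surjective f) (y : H) :
    Fintype.card H * (Finset.univ.filter (fun g => f g = y)).card = Fintype.card G := by
  classical
  have h1 : (Finset.univ : Finset G).card
      = ∑ z ∈ (Finset.univ : Finset H), (Finset.univ.filter (fun g => f g = z)).card :=
    Finset.card_eq_sum_card_fiberwise (fun g _ => Finset.mem_univ (f g))
  have h2 : ∀ z : H, (Finset.univ.filter (fun g => f g = z)).card
      = (Finset.univ.filter (fun g => f g = y)).card :=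
    fun z => MonoidHom.card_fiber_eq_of_mem_range f (hf z) (hf y)
  calc Fintype.card H * (Finset.univ.filter (fun g => f g = y)).card
      = ∑ _z : H, (Finset.univ.filter (fun g => f g = y)).card := by
        rw [Finset.sum_const, Finset.card_univ, smul_eq_mul]
    _ = ∑ z : H, (Finset.univ.filter (fun g => f g = z)).card :=
        Finset.sum_congr rfl fun z _ => (h2 z).symm
    _ = (Finset.univ : Finset G).card := h1.symm
    _ = Fintype.card G := Finset.card_univ

private lemma count_period (p : ℕ → Prop) [DecidablePred p] (e : ℕ)
    (hp : ∀ k, p (k + e) ↔ p k) (t : ℕ) :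
    ((range (e * t)).filter p).card = t * ((range e).filter p).card := by
  have hp' : ∀ t k, p (k + e * t) ↔ p k := by
    intro t
    induction t with
    | zero => simp
    | succ t ih =>
      intro k
      have hres : k + e * (t + 1) = (k + e * t) + e := by ring
      rw [hres, hp, ih]
  induction t with
  | zero => simp
  | succ t ih =>
    have hdisj : Disjoint ((range (e * t)).filter p)
        ((((range e).map (addLeftEmbedding (e * t)))).filter p) := by
      apply Finset.disjoint_filter_filter
      rw [Finset.disjoint_left]
      intro x hx hx'
      simp only [Finset.mem_range] at hx
      obtain ⟨y, _, rfl⟩ := Finset.mem_map.mp hx'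
      simp only [addLeftEmbedding_apply] at hx
      omega
    rw [Nat.mul_succ, Finset.range_add, Finset.filter_union,
      Finset.card_union_of_disjoint hdisj, ih, Finset.filter_map, Finset.card_map]
    have heq : (range e).filter (p ∘ (addLeftEmbedding (e * t))) = (range e).filter p := by
      apply Finset.filter_congr
      intro k _
      simp only [Function.comp, addLeftEmbedding_apply]
      rw [Nat.add_comm (e * t) k]
      exact hp' t k
    rw [heq]
    ring

/-- If `N ∣ c`, `λ = gcd(N, c/N)` and `gcd(m, N) = 1`, the number of integers `a ∈ [1, c]` with
`a ≡ m (mod N)` and `gcd(a, c/N) = 1` equals `λ·φ(c/N)/φ(λ)`. -/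
theorem stmt10 (N c : ℕ) (hN : 0 < N) (hc : 0 < c) (hNc : N ∣ c)
    (lam : ℕ) (hlam : lam = Nat.gcd N (c / N))
    (m : ℤ) (hm : Int.gcd m (N : ℤ) = 1) :
    Nat.totient lam *
      ((Finset.Icc 1 c).filter
        (fun a : ℕ => (a : ℤ) % (N : ℤ) = m % (N : ℤ) ∧ Nat.gcd a (c / N) = 1)).card
      = lam * Nat.totient (c / N) := by
  classical
  set d := c / N with hd
  have hdpos : 0 < d := Nat.div_pos (Nat.le_of_dvd hc hNc) hN
  have hcNd : c = N * d := (Nat.mul_div_cancel' hNc).symm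
  have hlamN : lam ∣ N := hlam ▸ Nat.gcd_dvd_left _ _
  have hlamd : lam ∣ d := hlam ▸ Nat.gcd_dvd_right _ _
  have hlampos : 0 < lam := hlam ▸ Nat.gcd_pos_of_pos_left _ hN
  set e := d / lam with he
  have hde : e * lam = d := Nat.div_mul_cancel hlamd
  have hepos : 0 < e := Nat.div_pos (Nat.le_of_dvd hdpos hlamd) hlampos
  have hdeN : d ∣ e * N := by
    rcases hlamN with ⟨N', hN'⟩
    exact ⟨N', by rw [hN', ← hde]; ring⟩
  obtain ⟨w, hw⟩ := hdeN
  -- the representative m0 of m mod N, with 1 ≤ m0 ≤ N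
  set m0 : ℕ := if (m % (N : ℤ)).toNat = 0 then N else (m % (N : ℤ)).toNat with hm0def
  have hmodnonneg : 0 ≤ m % (N : ℤ) := Int.emod_nonneg m (by exact_mod_cast hN.ne')
  have hmodlt : m % (N : ℤ) < N := Int.emod_lt_of_pos m (by exact_mod_cast hN)
  have hm01 : 1 ≤ m0 := by
    rw [hm0def]; split <;> omega
  have hm0N : m0 ≤ N := by
    rw [hm0def]; split <;> omega
  have hm0mod : (m0 : ℤ) % (N : ℤ) = m % (N : ℤ) := by
    rw [hm0def]; split_ifs with h
    · have h0 : m % (N : ℤ) = 0 := by omega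
      rw [h0, Int.emod_self]
    · rw [Int.toNat_of_nonneg hmodnonneg, Int.emod_emod_of_dvd _ dvd_rfl]
  have hm0copN : Nat.Coprime m0 N := by
    have hdvd : (N : ℤ) ∣ (m0 : ℤ) - m := Int.ModEq.dvd (Int.ModEq.symm hm0mod)
    obtain ⟨t, ht⟩ := hdvd
    have hcopZ : IsCoprime m (N : ℤ) := Int.isCoprime_iff_gcd_eq_one.mpr hm
    have h2 : IsCoprime ((m0 : ℤ)) (N : ℤ) := by
      have : (m0 : ℤ) = m + (N : ℤ) * t := by linarith
      rw [this]
      exact hcopZ.add_mul_left_left t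
    have := Int.isCoprime_iff_gcd_eq_one.mp h2
    rwa [Int.gcd_natCast_natCast] at this
  have hm0coplam : Nat.Coprime m0 lam := Nat.Coprime.coprime_dvd_right hlamN hm0copN
  -- Step A : card S = count over range d
  have stepA : ((Finset.Icc 1 c).filter
        (fun a : ℕ => (a : ℤ) % (N : ℤ) = m % (N : ℤ) ∧ Nat.gcd a d = 1)).card
      = ((range d).filter (fun k => Nat.gcd (m0 + k * N) d = 1)).card := by
    apply Finset.card_nbij' (fun a => (a - m0) / N) (fun k => m0 + k * N)
    · intro a ha
      simp only [Finset.mem_coe, Finset.mem_filter, Finset.mem_Icc] at ha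
      obtain ⟨⟨ha1, hac⟩, hamod, hagcd⟩ := ha
      have hdvd : (N : ℤ) ∣ (a : ℤ) - m0 := by
        apply Int.ModEq.dvd
        exact (hm0mod.trans hamod.symm)
      obtain ⟨t, ht⟩ := hdvd
      have ht0 : 0 ≤ t := by
        by_contra hneg
        push_neg at hneg
        have : t ≤ -1 := by omega
        have : (N : ℤ) * t ≤ (N : ℤ) * (-1) :=
          mul_le_mul_of_nonneg_left this (by exact_mod_cast hN.le)
        have hNa : (N : ℤ) ≥ 1 := by exact_mod_cast hN
        have hm0Na : (m0 : ℤ) ≤ N := by exact_mod_cast hm0N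
        have ha1a : (1 : ℤ) ≤ a := by exact_mod_cast ha1
        omega
      set k := t.toNat with hk
      have hkt : (k : ℤ) = t := Int.toNat_of_nonneg ht0
      have hak : a = m0 + k * N := by
        have : (a : ℤ) = (m0 : ℤ) + (k : ℤ) * N := by rw [hkt]; linarith
        exact_mod_cast this
      have hkd : k < d := by
        have hacNd : a ≤ N * d := hcNd ▸ hac
        rw [hak] at hacNd
        by_contra hge
        push_neg at hge
        have h1 : N * d ≤ N * k := Nat.mul_le_mul_left N hge
        have h2 : k * N = N * k := Nat.mul_comm _ _
        omega
      have hia : (a - m0) / N = k := by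
        rw [hak, Nat.add_sub_cancel_left, Nat.mul_div_cancel _ hN]
      simp only [Finset.mem_coe, Finset.mem_filter, Finset.mem_range]
      rw [hia]
      exact ⟨hkd, hak ▸ hagcd⟩
    · intro k hk
      simp only [Finset.mem_coe, Finset.mem_filter, Finset.mem_range] at hk
      obtain ⟨hkd, hkgcd⟩ := hk
      simp only [Finset.mem_coe, Finset.mem_filter, Finset.mem_Icc]
      refine ⟨⟨by omega, ?_⟩, ?_, hkgcd⟩
      · have h1 : k + 1 ≤ d := hkd
        have h2 : (k + 1) * N ≤ d * N := Nat.mul_le_mul_right N h1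
        have h3 : d * N = N * d := Nat.mul_comm _ _
        have h4 : (k + 1) * N = k * N + N := by ring
        omega
      · push_cast
        rw [Int.add_mul_emod_self_right, hm0mod]
    · intro a ha
      simp only [Finset.mem_coe, Finset.mem_filter, Finset.mem_Icc] at ha
      obtain ⟨⟨ha1, hac⟩, hamod, hagcd⟩ := ha
      have hdvd : (N : ℤ) ∣ (a : ℤ) - m0 := by
        apply Int.ModEq.dvd
        exact (hm0mod.trans hamod.symm)
      obtain ⟨t, ht⟩ := hdvd
      have ht0 : 0 ≤ t := by
        by_contra hneg
        push_neg at hneg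
        have : t ≤ -1 := by omega
        have : (N : ℤ) * t ≤ (N : ℤ) * (-1) :=
          mul_le_mul_of_nonneg_left this (by exact_mod_cast hN.le)
        have hNa : (N : ℤ) ≥ 1 := by exact_mod_cast hN
        have hm0Na : (m0 : ℤ) ≤ N := by exact_mod_cast hm0N
        have ha1a : (1 : ℤ) ≤ a := by exact_mod_cast ha1
        omega
      have hkt : ((t.toNat : ℤ)) = t := Int.toNat_of_nonneg ht0
      have hak : a = m0 + t.toNat * N := by
        have : (a : ℤ) = (m0 : ℤ) + ((t.toNat : ℤ)) * N := by rw [hkt]; linarith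
        exact_mod_cast this
      dsimp only
      rw [hak, Nat.add_sub_cancel_left, Nat.mul_div_cancel _ hN, ← hak]
    · intro k hk
      dsimp only
      rw [Nat.add_sub_cancel_left, Nat.mul_div_cancel _ hN]
  -- Step B : periodicity
  have stepB : ((range d).filter (fun k => Nat.gcd (m0 + k * N) d = 1)).card
      = lam * ((range e).filter (fun k => Nat.gcd (m0 + k * N) d = 1)).card := by
    have hper : ∀ k, Nat.gcd (m0 + (k + e) * N) d = 1 ↔ Nat.gcd (m0 + k * N) d = 1 := by
      intro k
      have h1 : m0 + (k + e) * N = (m0 + k * N) + d * w := by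
        rw [← hw]; ring
      rw [h1, Nat.gcd_add_mul_left_left]
    calc ((range d).filter (fun k => Nat.gcd (m0 + k * N) d = 1)).card
        = ((range (e * lam)).filter (fun k => Nat.gcd (m0 + k * N) d = 1)).card := by rw [hde]
      _ = lam * ((range e).filter (fun k => Nat.gcd (m0 + k * N) d = 1)).card :=
        count_period _ e hper lam
  -- Step C : bijection with the fiber
  haveI : NeZero d := ⟨hdpos.ne'⟩
  haveI : NeZero lam := ⟨hlampos.ne'⟩
  set u0 : (ZMod lam)ˣ := ZMod.unitOfCoprime m0 hm0coplam with hu0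
  set f : (ZMod d)ˣ →* (ZMod lam)ˣ := ZMod.unitsMap hlamd with hf
  have hcopNe : Nat.Coprime (N / lam) e := by
    have := Nat.coprime_div_gcd_div_gcd (hlam ▸ hlampos : 0 < Nat.gcd N d)
    rw [← hlam] at this
    exact this
  have stepC : ((range e).filter (fun k => Nat.gcd (m0 + k * N) d = 1)).card
      = (Finset.univ.filter (fun u : (ZMod d)ˣ => f u = u0)).card := by
    apply Finset.card_bij
      (fun k hk => ZMod.unitOfCoprime (m0 + k * N) ((Finset.mem_filter.mp hk).2))
    · intro k hk
      simp only [Finset.mem_filter, Finset.mem_univ, true_and]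
      apply Units.ext
      rw [hf]
      show (ZMod.castHom hlamd (ZMod lam)) ((ZMod.unitOfCoprime (m0 + k * N) _ : (ZMod d)ˣ) : ZMod d)
        = (u0 : ZMod lam)
      rw [ZMod.coe_unitOfCoprime, map_natCast, hu0, ZMod.coe_unitOfCoprime]
      have hNzero : ((N : ℕ) : ZMod lam) = 0 := (ZMod.natCast_eq_zero_iff N lam).mpr hlamN
      push_cast
      rw [hNzero]
      ring
    · intro k hk k' hk' heq
      have hval : (((m0 + k * N : ℕ)) : ZMod d) = ((m0 + k' * N : ℕ) : ZMod d) := by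
        have := congrArg (fun u : (ZMod d)ˣ => (u : ZMod d)) heq
        simpa only [ZMod.coe_unitOfCoprime] using this
      have hmodeq : (m0 + k * N) ≡ (m0 + k' * N) [MOD d] :=
        (ZMod.natCast_eq_natCast_iff _ _ _).mp hval
      have hmodeq2 : k * N ≡ k' * N [MOD d] := Nat.ModEq.add_left_cancel' m0 hmodeq
      have hmodeq3 : k ≡ k' [MOD d / Nat.gcd d N] :=
        Nat.ModEq.cancel_right_div_gcd hdpos hmodeq2
      rw [Nat.gcd_comm, ← hlam] at hmodeq3
      simp only [Finset.mem_filter, Finset.mem_range] at hk hk'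
      exact Nat.ModEq.eq_of_lt_of_lt hmodeq3 hk.1 hk'.1
    · intro u hu
      simp only [Finset.mem_filter, Finset.mem_univ, true_and] at hu
      set r := ((u : ZMod d)).val with hr
      have hrlt : r < d := ZMod.val_lt _
      have hrcop : Nat.Coprime r d := ZMod.val_coe_unit_coprime u
      have hru : ((r : ℕ) : ZMod d) = (u : ZMod d) := by
        rw [hr, ZMod.natCast_val, ZMod.cast_id]
      -- r ≡ m0 mod lam
      have hrm0 : ((r : ℕ) : ZMod lam) = ((m0 : ℕ) : ZMod lam) := by
        have h1 := congrArg (fun v : (ZMod lam)ˣ => (v : ZMod lam)) hu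
        rw [hf] at h1
        have h2 : ((ZMod.unitsMap hlamd u : (ZMod lam)ˣ) : ZMod lam)
            = (ZMod.castHom hlamd (ZMod lam)) (u : ZMod d) := rfl
        rw [h2, ZMod.castHom_apply, ← ZMod.natCast_val] at h1
        rw [h1, hu0, ZMod.coe_unitOfCoprime]
      have hrm0' : r ≡ m0 [MOD lam] := (ZMod.natCast_eq_natCast_iff _ _ _).mp hrm0
      have hlamdvd : (lam : ℤ) ∣ (m0 : ℤ) - r := (Nat.modEq_iff_dvd).mp hrm0'
      obtain ⟨t, ht⟩ := hlamdvd
      -- Bezout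
      have hbez : (lam : ℤ) = N * Nat.gcdA N d + d * Nat.gcdB N d := by
        rw [hlam]; exact Nat.gcd_eq_gcd_ab N d
      set A := Nat.gcdA N d
      set B := Nat.gcdB N d
      set z : ℤ := A * (-t) with hz
      have hepos' : (0 : ℤ) < e := by exact_mod_cast hepos
      set k : ℕ := (z % e).toNat with hkdef
      have hkz : (k : ℤ) = z % e := Int.toNat_of_nonneg (Int.emod_nonneg z hepos'.ne')
      have hklt : k < e := by
        have := Int.emod_lt_of_pos z hepos'
        omega
      have hzk : z - k = e * (z / e) := by
        rw [hkz, Int.emod_def]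
        ring
      have hwZ : (e : ℤ) * N = d * w := by exact_mod_cast hw
      have hkey : (r : ℤ) - ((m0 : ℤ) + k * N) = d * (w * (z / e) + B * (-t)) := by
        have hzz : z = A * (-t) := hz
        linear_combination (-1 : ℤ) * ht + (-t) * hbez + (N : ℤ) * hzk + (z / e) * hwZ
      have hmodeq : ((m0 + k * N : ℕ) : ℤ) ≡ (r : ℤ) [ZMOD (d : ℕ)] := by
        apply Int.modEq_iff_dvd.mpr
        push_cast
        exact ⟨_, hkey⟩
      have hcast : ((m0 + k * N : ℕ) : ZMod d) = ((r : ℕ) : ZMod d) := by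
        have := (ZMod.intCast_eq_intCast_iff _ _ _).mpr hmodeq
        push_cast at this ⊢
        exact this
      have hcop : Nat.Coprime (m0 + k * N) d := by
        have : IsUnit (((m0 + k * N : ℕ)) : ZMod d) := by
          rw [hcast, hru]
          exact u.isUnit
        exact (ZMod.isUnit_iff_coprime _ _).mp this
      refine ⟨k, Finset.mem_filter.mpr ⟨Finset.mem_range.mpr hklt, hcop⟩, ?_⟩
      apply Units.ext
      rw [ZMod.coe_unitOfCoprime, hcast, hru]
  -- Step D : fiber counting
  have stepD : Nat.totient lam *
      (Finset.univ.filter (fun u : (ZMod d)ˣ => f u = u0)).card = Nat.totient d := by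
    rw [← ZMod.card_units_eq_totient lam, ← ZMod.card_units_eq_totient d]
    exact fiber_card_aux f (ZMod.unitsMap_surjective hlamd) u0
  rw [stepA, stepB, stepC, ← Nat.mul_assoc, Nat.mul_comm (Nat.totient lam) lam,
    Nat.mul_assoc, stepD]
end

section
/- Let N and c be positive integers with N | c, let n be a nonzero integer, and let m be an integer with gcd(m, c/N) = 1. Define the exponential sum S(m) := Σ e^{2πi·a·n/c}, the sum taken over all integers a with 1 ≤ a ≤ c, a ≡ m (mod N), and gcd(a, c/N) = 1. Then |S(m)| ≤ σ(|n|), where σ(|n|) is the sum of the positive divisors of |n|. -/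
open Complex Finset

private lemma mob_sum (k : ℕ) :
    (∑ d ∈ k.divisors, ((ArithmeticFunction.moebius d : ℤ) : ℂ)) = if k = 1 then 1 else 0 := by
  have h := congrArg (fun f : ArithmeticFunction ℤ => (f k : ℤ))
    ArithmeticFunction.moebius_mul_coe_zeta
  simp only [ArithmeticFunction.coe_mul_zeta_apply, ArithmeticFunction.one_apply] at h
  calc (∑ d ∈ k.divisors, ((ArithmeticFunction.moebius d : ℤ) : ℂ))
      = ((∑ d ∈ k.divisors, ArithmeticFunction.moebius d : ℤ) : ℂ) := by push_cast; ring
    _ = _ := by rw [h]; split <;> simp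

private lemma term_eq (x : ℕ) (n : ℤ) (cc : ℕ) (hcc : 0 < cc) :
    (2 * (Real.pi:ℂ) * Complex.I * (x : ℂ) * (n : ℂ) / (cc : ℂ))
      = ((2 * Real.pi * (x:ℝ) * (n:ℝ) / (cc:ℝ) : ℝ) : ℂ) * Complex.I := by
  push_cast
  have : ((cc:ℂ)) ≠ 0 := by exact_mod_cast hcc.ne'
  field_simp

private lemma abs_term (x : ℕ) (n : ℤ) (cc : ℕ) (hcc : 0 < cc) :
    ‖Complex.exp (2 * (Real.pi:ℂ) * Complex.I * (x : ℂ) * (n : ℂ) / (cc : ℂ))‖ = 1 := by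
  rw [term_eq x n cc hcc, Complex.norm_exp_ofReal_mul_I]

private lemma crt_exists (N d : ℕ) (hN : 0 < N) (hd : 0 < d) (hcop : Nat.Coprime N d) (m : ℤ) :
    ∃ a0 : ℕ, 1 ≤ a0 ∧ a0 ≤ N * d ∧ (a0 : ℤ) % N = m % N ∧ d ∣ a0 := by
  have hco : IsCoprime (d : ℤ) (N : ℤ) := by
    rw [Int.isCoprime_iff_gcd_eq_one, Int.gcd_natCast_natCast]
    exact hcop.symm
  obtain ⟨u, v, huv⟩ := hco
  set x : ℤ := m * (u * d) with hx
  have hxm : x % N = m % N := by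
    have hdvd : (N:ℤ) ∣ x - m := by
      refine ⟨m * (-v), ?_⟩
      have h7 : u * (d:ℤ) = 1 - v * N := by linarith
      rw [hx, h7]; ring
    have h8 : Int.ModEq (N:ℤ) x m := by
      rw [Int.modEq_iff_dvd, show m - x = -(x - m) by ring]
      exact dvd_neg.mpr hdvd
    exact h8
  have hdx : (d:ℤ) ∣ x := ⟨m * u, by rw [hx]; ring⟩
  have hNd : (0:ℤ) < (N*d : ℕ) := by positivity
  set r : ℤ := x % (N * d : ℕ) with hr
  have hr0 : 0 ≤ r := Int.emod_nonneg _ hNd.ne'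
  have hrlt : r < (N*d : ℕ) := Int.emod_lt_of_pos _ hNd
  have hdr : (d:ℤ) ∣ r := by
    have h1 : r = x - (N*d : ℕ) * (x / (N*d : ℕ)) := by
      rw [hr, Int.emod_def]
    rw [h1]
    exact dvd_sub hdx (Dvd.dvd.mul_right (by push_cast; exact Dvd.intro_left _ rfl) _)
  have hrm : r % N = m % N := by
    have h2 : (N:ℤ) ∣ (N*d : ℕ) := by push_cast; exact Dvd.intro _ rfl
    have := Int.emod_emod_of_dvd x h2
    rw [← hxm, ← this, hr]
  by_cases hr0' : r = 0
  · refine ⟨N * d, Nat.mul_pos hN hd, le_refl _, ?_, Dvd.intro_left _ rfl⟩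
    have h0 : ((N*d : ℕ) : ℤ) % N = 0 := by push_cast; exact Int.mul_emod_right _ _
    rw [h0, ← hrm, hr0']
    simp
  · refine ⟨r.toNat, ?_, ?_, ?_, ?_⟩
    · omega
    · omega
    · rw [Int.toNat_of_nonneg hr0]; exact hrm
    · have : (d:ℤ) ∣ (r.toNat : ℤ) := by rw [Int.toNat_of_nonneg hr0]; exact hdr
      exact_mod_cast this

private lemma param_eq (N d K a0 : ℕ) (hN : 0 < N) (hd : 0 < d) (hK : 0 < K)
    (m : ℤ) (hcop : Nat.Coprime N d)
    (ha1 : 1 ≤ a0) (ha2 : a0 ≤ N * d) (ham : (a0 : ℤ) % N = m % N) (had : d ∣ a0) :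
    (Finset.Icc 1 (N * (d * K))).filter (fun a : ℕ => (a : ℤ) % N = m % N ∧ d ∣ a)
      = (Finset.range K).image (fun t => a0 + N * d * t) := by
  have hco : IsCoprime (N : ℤ) (d : ℤ) := by
    rw [Int.isCoprime_iff_gcd_eq_one, Int.gcd_natCast_natCast]; exact hcop
  ext a
  simp only [mem_filter, mem_Icc, mem_image, mem_range]
  constructor
  · rintro ⟨⟨h1, h2⟩, hmod, hdvd⟩
    have hNdvd : (N:ℤ) ∣ (a:ℤ) - a0 := by
      have h3 : Int.ModEq (N:ℤ) (a:ℤ) (a0:ℤ) := by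
        show (a:ℤ) % N = (a0:ℤ) % N
        rw [hmod, ham]
      rw [show (a:ℤ) - a0 = -((a0:ℤ) - a) by ring]
      exact dvd_neg.mpr h3.dvd
    have hddvd : (d:ℤ) ∣ (a:ℤ) - a0 := by
      have h4 : (d:ℤ) ∣ (a:ℤ) := Int.natCast_dvd_natCast.mpr hdvd
      have h5 : (d:ℤ) ∣ (a0:ℤ) := Int.natCast_dvd_natCast.mpr had
      exact dvd_sub h4 h5
    obtain ⟨t', ht'⟩ := hco.mul_dvd hNdvd hddvd
    have hM : (0:ℤ) < (N:ℤ) * d := by positivity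
    have ht'0 : 0 ≤ t' := by
      by_contra hneg
      push_neg at hneg
      have : t' ≤ -1 := by omega
      have : (N:ℤ) * d * t' ≤ (N:ℤ) * d * (-1) := by
        exact mul_le_mul_of_nonneg_left this hM.le
      have hlow : (a:ℤ) - a0 ≥ 1 - (N:ℤ)*d := by
        have : (a0:ℤ) ≤ (N:ℤ)*d := by exact_mod_cast ha2
        have : (1:ℤ) ≤ a := by exact_mod_cast h1
        omega
      omega
    have ht'K : t' < K := by
      by_contra hge
      push_neg at hge
      have : (N:ℤ) * d * K ≤ (N:ℤ) * d * t' := mul_le_mul_of_nonneg_left hge hM.le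
      have hup : (a:ℤ) - a0 ≤ (N:ℤ)*(d*K) - 1 := by
        have : (a:ℤ) ≤ (N:ℤ)*(d*K) := by exact_mod_cast h2
        have : (1:ℤ) ≤ a0 := by exact_mod_cast ha1
        omega
      have : (N:ℤ) * d * K = (N:ℤ)*(d*K) := by ring
      omega
    refine ⟨t'.toNat, by omega, ?_⟩
    have : (a:ℤ) = a0 + N * d * t' := by omega
    have : (a:ℤ) = ((a0 + N * d * t'.toNat : ℕ) : ℤ) := by
      push_cast
      rw [Int.toNat_of_nonneg ht'0]
      omega
    exact_mod_cast this.symm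
  · rintro ⟨t, ht, rfl⟩
    refine ⟨⟨by omega, ?_⟩, ?_, had.add ⟨N * t, by ring⟩⟩
    · have h6 : t + 1 ≤ K := ht
      have := Nat.mul_le_mul_left (N * d) h6
      calc a0 + N * d * t ≤ N * d + N * d * t := by omega
        _ = N * d * (t + 1) := by ring
        _ ≤ N * d * K := this
        _ = N * (d * K) := by ring
    · push_cast
      have : ((a0:ℤ) + N * d * t) % N = (a0:ℤ) % N := by
        have : (a0:ℤ) + (N:ℤ) * d * t = a0 + (N:ℤ) * (d * t) := by ring
        rw [this, Int.add_mul_emod_self_left]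
      rw [this, ham]


private lemma inner_bound (N Q d : ℕ) (hN : 0 < N) (hQ : 0 < Q) (hdQ : d ∣ Q) (hd0 : 0 < d)
    (n m : ℤ) (hn : n ≠ 0) (hm : Int.gcd m (Q : ℤ) = 1) :
    ‖∑ a ∈ (Finset.Icc 1 (N * Q)).filter
        (fun a : ℕ => (a : ℤ) % (N : ℤ) = m % (N : ℤ) ∧ d ∣ a),
        Complex.exp (2 * Real.pi * Complex.I * (a : ℂ) * (n : ℂ) / ((N * Q : ℕ) : ℂ))‖
      ≤ if Nat.Coprime N d ∧ (Q / d) ∣ n.natAbs then ((Q / d : ℕ) : ℝ) else 0 := by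
  by_cases hcop : Nat.Coprime N d
  case neg =>
    have hempty : (Finset.Icc 1 (N*Q)).filter
        (fun a : ℕ => (a:ℤ)%(N:ℤ) = m%(N:ℤ) ∧ d ∣ a) = ∅ := by
      rw [Finset.eq_empty_iff_forall_notMem]
      rintro a ha
      simp only [mem_filter, mem_Icc] at ha
      obtain ⟨⟨h1, h2⟩, hmod, hdvd⟩ := ha
      set g := Nat.gcd N d with hg
      have hgN : g ∣ N := Nat.gcd_dvd_left _ _
      have hgd : g ∣ d := Nat.gcd_dvd_right _ _
      have hga : (g:ℤ) ∣ (a:ℤ) := Int.natCast_dvd_natCast.mpr (hgd.trans hdvd)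
      have hgm : (g:ℤ) ∣ m := by
        have hma : Int.ModEq (N:ℤ) m (a:ℤ) := by
          show m % (N:ℤ) = (a:ℤ) % (N:ℤ)
          rw [hmod]
        have h4 : (N:ℤ) ∣ (a:ℤ) - m := hma.dvd
        have h5 : (g:ℤ) ∣ (a:ℤ) - m := (Int.natCast_dvd_natCast.mpr hgN).trans h4
        have := dvd_sub hga h5
        simpa using this
      have hgQ : g ∣ Q := hgd.trans hdQ
      have hgm' : g ∣ m.natAbs := Int.natCast_dvd.mp hgm
      have : g ∣ Nat.gcd m.natAbs Q := Nat.dvd_gcd hgm' hgQ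
      have hgcd : Nat.gcd m.natAbs Q = 1 := by
        have : Int.gcd m (Q:ℤ) = Nat.gcd m.natAbs Q := by
          simp [Int.gcd]
        rw [← this, hm]
      rw [hgcd, Nat.dvd_one] at this
      exact hcop this
    rw [hempty]
    simp [hcop]
  case pos =>
    obtain ⟨K, hQK⟩ := hdQ
    have hK : 0 < K := Nat.pos_of_ne_zero (by rintro rfl; rw [hQK] at hQ; simp at hQ)
    have hKd : Q / d = K := by rw [hQK]; exact Nat.mul_div_cancel_left _ hd0
    obtain ⟨a0, ha1, ha2, ham, had⟩ := crt_exists N d hN hd0 hcop m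
    have hset := param_eq N d K a0 hN hd0 hK m hcop ha1 ha2 ham had
    rw [show N * Q = N * (d * K) by rw [hQK]]
    have hinj : ∀ t1 ∈ Finset.range K, ∀ t2 ∈ Finset.range K,
        a0 + N * d * t1 = a0 + N * d * t2 → t1 = t2 := by
      intro t1 _ t2 _ h
      exact Nat.eq_of_mul_eq_mul_left (Nat.mul_pos hN hd0) (by omega)
    rw [hset, Finset.sum_image hinj, hKd]
    have hcc : 0 < N * (d * K) := by positivity
    by_cases hKn : K ∣ n.natAbs
    · rw [if_pos ⟨hcop, hKn⟩]
      calc ‖∑ t ∈ Finset.range K,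
            Complex.exp (2 * Real.pi * Complex.I * ((a0 + N * d * t : ℕ) : ℂ) * (n : ℂ)
              / ((N * (d * K) : ℕ) : ℂ))‖
          ≤ ∑ t ∈ Finset.range K, ‖Complex.exp
              (2 * Real.pi * Complex.I * ((a0 + N * d * t : ℕ) : ℂ) * (n : ℂ)
              / ((N * (d * K) : ℕ) : ℂ))‖ := norm_sum_le _ _
        _ = ∑ _t ∈ Finset.range K, (1:ℝ) := by
            refine Finset.sum_congr rfl fun t _ => ?_
            exact abs_term _ n _ hcc
        _ = K := by simp
    · rw [if_neg (by tauto)]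
      set z : ℂ := Complex.exp (2 * Real.pi * Complex.I * (n:ℂ) / (K:ℂ)) with hz
      have hKC : ((K:ℕ):ℂ) ≠ 0 := Nat.cast_ne_zero.mpr hK.ne'
      have hterm : ∀ t ∈ Finset.range K,
          Complex.exp (2 * Real.pi * Complex.I * ((a0 + N * d * t : ℕ) : ℂ) * (n : ℂ)
            / ((N * (d * K) : ℕ) : ℂ))
          = Complex.exp (2 * Real.pi * Complex.I * (a0 : ℂ) * (n : ℂ)
            / ((N * (d * K) : ℕ) : ℂ)) * z ^ t := by
        intro t _
        rw [hz, ← Complex.exp_nat_mul, ← Complex.exp_add]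
        congr 1
        have hNC : ((N:ℕ):ℂ) ≠ 0 := Nat.cast_ne_zero.mpr hN.ne'
        have hdC : ((d:ℕ):ℂ) ≠ 0 := Nat.cast_ne_zero.mpr hd0.ne'
        push_cast
        field_simp
      rw [Finset.sum_congr rfl hterm, ← Finset.mul_sum]
      have h2pi : (2 * (Real.pi:ℂ) * Complex.I) ≠ 0 := by
        simp [Real.pi_ne_zero, Complex.I_ne_zero]
      have hz1 : z ≠ 1 := by
        intro h
        rw [hz, Complex.exp_eq_one_iff] at h
        obtain ⟨k, hk⟩ := h
        apply hKn
        field_simp at hk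
        have h8 : 2 * (Real.pi:ℂ) * Complex.I * (n:ℂ)
            = (2 * (Real.pi:ℂ) * Complex.I) * ((k:ℂ) * (K:ℂ)) := by
          linear_combination (2 * (Real.pi:ℂ) * Complex.I) * hk
        have h9 : (n : ℂ) = (k : ℂ) * (K : ℂ) := mul_left_cancel₀ h2pi h8
        have hnk : n = k * K := by exact_mod_cast h9
        exact Int.natCast_dvd.mp ⟨k, by rw [hnk]; ring⟩
      have hzK : z ^ K = 1 := by
        rw [hz, ← Complex.exp_nat_mul]
        have : ((K:ℕ):ℂ) * (2 * Real.pi * Complex.I * (n:ℂ) / (K:ℂ)) = (n:ℂ) * (2 * Real.pi * Complex.I) := by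
          field_simp
        rw [this]
        exact_mod_cast Complex.exp_int_mul_two_pi_mul_I n
      rw [geom_sum_eq hz1, hzK]
      simp

/-- Bound on the exponential sum `S(m) = ∑ e^{2πian/c}` over `a ∈ [1,c]` with `a ≡ m (mod N)`
and `gcd(a, c/N) = 1`: its absolute value is at most `σ(|n|)`. -/
theorem stmt11 (N c : ℕ) (hN : 0 < N) (hc : 0 < c) (hNc : N ∣ c)
    (n : ℤ) (hn : n ≠ 0) (m : ℤ) (hm : Int.gcd m ((c / N : ℕ) : ℤ) = 1) :
    ‖∑ a ∈ (Finset.Icc 1 c).filter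
        (fun a : ℕ => (a : ℤ) % (N : ℤ) = m % (N : ℤ) ∧ Nat.gcd a (c / N) = 1),
        Complex.exp (2 * Real.pi * Complex.I * (a : ℂ) * (n : ℂ) / (c : ℂ))‖
      ≤ ∑ d ∈ n.natAbs.divisors, (d : ℝ) := by
  obtain ⟨Q, rfl⟩ := hNc
  have hQ : 0 < Q := Nat.pos_of_ne_zero (by rintro rfl; simp at hc)
  have hQN : N * Q / N = Q := Nat.mul_div_cancel_left _ hN
  rw [hQN] at hm ⊢
  have hQ0 : Q ≠ 0 := hQ.ne'
  set f : ℕ → ℂ := fun a =>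
    Complex.exp (2 * Real.pi * Complex.I * (a : ℂ) * (n : ℂ) / ((N * Q : ℕ) : ℂ)) with hf
  have hstep : (∑ a ∈ (Finset.Icc 1 (N * Q)).filter
        (fun a : ℕ => (a : ℤ) % (N : ℤ) = m % (N : ℤ) ∧ Nat.gcd a Q = 1), f a)
      = ∑ d ∈ Q.divisors, ((ArithmeticFunction.moebius d : ℤ) : ℂ) *
          ∑ a ∈ (Finset.Icc 1 (N * Q)).filter
            (fun a : ℕ => (a : ℤ) % (N : ℤ) = m % (N : ℤ) ∧ d ∣ a), f a := by
    calc (∑ a ∈ (Finset.Icc 1 (N * Q)).filter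
            (fun a : ℕ => (a : ℤ) % (N : ℤ) = m % (N : ℤ) ∧ Nat.gcd a Q = 1), f a)
        = ∑ a ∈ (Finset.Icc 1 (N * Q)).filter
            (fun a : ℕ => (a : ℤ) % (N : ℤ) = m % (N : ℤ)),
            (if Nat.gcd a Q = 1 then f a else 0) := by
          rw [← Finset.filter_filter, Finset.sum_filter]
      _ = ∑ a ∈ (Finset.Icc 1 (N * Q)).filter
            (fun a : ℕ => (a : ℤ) % (N : ℤ) = m % (N : ℤ)),
            ∑ d ∈ Q.divisors, (if d ∣ a then ((ArithmeticFunction.moebius d : ℤ) : ℂ) * f a else 0) := by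
          refine Finset.sum_congr rfl fun a ha => ?_
          simp only [Finset.mem_filter, Finset.mem_Icc] at ha
          have ha0 : a ≠ 0 := by omega
          have hdiv : Q.divisors.filter (· ∣ a) = (Nat.gcd a Q).divisors := by
            ext e
            simp only [Nat.mem_divisors, Finset.mem_filter]
            constructor
            · rintro ⟨⟨h1, _⟩, h3⟩
              exact ⟨Nat.dvd_gcd h3 h1, fun h => ha0 (Nat.eq_zero_of_gcd_eq_zero_left h)⟩
            · rintro ⟨h1, _⟩
              exact ⟨⟨h1.trans (Nat.gcd_dvd_right _ _), hQ0⟩, h1.trans (Nat.gcd_dvd_left _ _)⟩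
          rw [← Finset.sum_filter, hdiv, ← Finset.sum_mul, mob_sum, ite_mul, one_mul, zero_mul]
      _ = ∑ d ∈ Q.divisors, ∑ a ∈ (Finset.Icc 1 (N * Q)).filter
            (fun a : ℕ => (a : ℤ) % (N : ℤ) = m % (N : ℤ)),
            (if d ∣ a then ((ArithmeticFunction.moebius d : ℤ) : ℂ) * f a else 0) :=
          Finset.sum_comm
      _ = _ := by
          refine Finset.sum_congr rfl fun d hd => ?_
          rw [← Finset.sum_filter, Finset.filter_filter, ← Finset.mul_sum]
  rw [hstep]
  have habs : ‖∑ d ∈ Q.divisors, ((ArithmeticFunction.moebius d : ℤ) : ℂ) *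
          ∑ a ∈ (Finset.Icc 1 (N * Q)).filter
            (fun a : ℕ => (a : ℤ) % (N : ℤ) = m % (N : ℤ) ∧ d ∣ a), f a‖
      ≤ ∑ d ∈ Q.divisors,
          (if Nat.Coprime N d ∧ (Q / d) ∣ n.natAbs then ((Q / d : ℕ) : ℝ) else 0) := by
    refine (norm_sum_le _ _).trans (Finset.sum_le_sum fun d hd => ?_)
    rw [norm_mul]
    have h1 : ‖((ArithmeticFunction.moebius d : ℤ) : ℂ)‖ ≤ 1 := by
      rw [Complex.norm_intCast]
      exact_mod_cast ArithmeticFunction.abs_moebius_le_one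
    have h2 := inner_bound N Q d hN hQ (Nat.dvd_of_mem_divisors hd)
      (Nat.pos_of_mem_divisors hd) n m hn hm
    calc ‖((ArithmeticFunction.moebius d : ℤ) : ℂ)‖ * ‖
          (∑ a ∈ (Finset.Icc 1 (N * Q)).filter
            (fun a : ℕ => (a : ℤ) % (N : ℤ) = m % (N : ℤ) ∧ d ∣ a), f a)‖
        ≤ 1 * (if Nat.Coprime N d ∧ (Q / d) ∣ n.natAbs then ((Q / d : ℕ) : ℝ) else 0) :=
          mul_le_mul h1 h2 (norm_nonneg _) zero_le_one
      _ = _ := one_mul _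
  refine habs.trans ?_
  rw [← Finset.sum_filter]
  set P : ℕ → Prop := fun d => Nat.Coprime N d ∧ (Q / d) ∣ n.natAbs with hP
  have hinj : ∀ d1 ∈ Q.divisors.filter P, ∀ d2 ∈ Q.divisors.filter P,
      Q / d1 = Q / d2 → d1 = d2 := by
    intro d1 hd1 d2 hd2 h
    simp only [Finset.mem_filter, Nat.mem_divisors] at hd1 hd2
    rw [← Nat.div_div_self hd1.1.1 hQ0, h, Nat.div_div_self hd2.1.1 hQ0]
  rw [show (∑ d ∈ Q.divisors.filter P, ((Q / d : ℕ) : ℝ))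
      = ∑ e ∈ (Q.divisors.filter P).image (fun d => Q / d), (e : ℝ) from
    (Finset.sum_image hinj).symm]
  refine Finset.sum_le_sum_of_subset_of_nonneg ?_ (fun e _ _ => by positivity)
  intro e he
  simp only [Finset.mem_image, Finset.mem_filter, Nat.mem_divisors] at he
  obtain ⟨d, ⟨⟨hdQ, _⟩, _, hdvd⟩, rfl⟩ := he
  rw [Nat.mem_divisors]
  exact ⟨hdvd, Int.natAbs_ne_zero.mpr hn⟩
end

section
/- Let N and β be positive integers, let λ := gcd(N, β), and let s ∈ ℂ with Re s > 1. Then Σ_{c ≥ 1, c ≡ β (mod N)} φ(c)·c^{−2s} = (1/φ(N/λ)) · Σ_χ χ(β/λ)^{−1} · (φ(λ)/λ^{2s}) · (L(2s−1, χ)/L(2s, χ)) · Π_{p | λ} (1 − χ(p)·p^{−2s})^{−1}, where the outer sum runs over all Dirichlet characters χ modulo N/λ, the product runs over the primes p dividing λ, L(·, χ) denotes the Dirichlet L-function of χ, and φ is Euler's totient function. (Note gcd(β/λ, N/λ) = 1, so χ(β/λ) ≠ 0.) -/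
lemma aux_cast_mul_cpow (a b : ℕ) (r : ℂ) : ((a * b : ℕ) : ℂ) ^ r = (a : ℂ) ^ r * (b : ℂ) ^ r := by
  push_cast
  exact Complex.natCast_mul_natCast_cpow a b r

lemma aux_cast_pow_cpow (p e : ℕ) (r : ℂ) : ((p ^ e : ℕ) : ℂ) ^ r = ((p : ℂ) ^ r) ^ e := by
  rw [Nat.cast_pow, ← Complex.natCast_cpow_natCast_mul, Complex.cpow_nat_mul]

lemma totient_aux {lam : ℕ} (hlam : lam ≠ 0) {m n : ℕ} (h : Nat.Coprime m n) :
    Nat.totient lam * Nat.totient (lam * (m * n))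
      = Nat.totient (lam * m) * Nat.totient (lam * n) := by
  have hg : Nat.gcd (lam * m) n = Nat.gcd lam n := Nat.Coprime.gcd_mul_right_cancel lam h
  have h1 := Nat.totient_gcd_mul_totient_mul (lam * m) n
  rw [hg] at h1
  have h2 := Nat.totient_gcd_mul_totient_mul lam n
  have hφg : 0 < Nat.totient (Nat.gcd lam n) :=
    Nat.totient_pos.mpr (Nat.gcd_pos_of_pos_left n (Nat.pos_of_ne_zero hlam))
  refine Nat.eq_of_mul_eq_mul_left hφg ?_
  rw [← mul_assoc lam m n]
  calc Nat.totient (Nat.gcd lam n) * (Nat.totient lam * Nat.totient (lam * m * n))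
      = Nat.totient lam * (Nat.totient (Nat.gcd lam n) * Nat.totient (lam * m * n)) := by ring
    _ = Nat.totient lam * (Nat.totient (lam * m) * Nat.totient n * Nat.gcd lam n) := by rw [h1]
    _ = Nat.totient (lam * m) * (Nat.totient lam * Nat.totient n * Nat.gcd lam n) := by ring
    _ = Nat.totient (lam * m) * (Nat.totient (Nat.gcd lam n) * Nat.totient (lam * n)) := by
        rw [h2]
    _ = _ := by ring

lemma totient_lam_pow_of_dvd {lam p : ℕ} (hp : p.Prime) (hd : p ∣ lam) (e : ℕ) :
    Nat.totient (lam * p ^ e) = p ^ e * Nat.totient lam := by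
  induction e with
  | zero => simp
  | succ e ih =>
      have h : lam * p ^ (e + 1) = p * (lam * p ^ e) := by ring
      rw [h, Nat.totient_mul_of_prime_of_dvd hp (dvd_mul_of_dvd_left hd _), ih]
      ring

lemma totient_lam_pow_of_not_dvd {lam p : ℕ} (hp : p.Prime) (hd : ¬ p ∣ lam) (e : ℕ) :
    Nat.totient (lam * p ^ e) = Nat.totient lam * Nat.totient (p ^ e) :=
  Nat.totient_mul (((hp.coprime_iff_not_dvd).mpr hd).symm.pow_right e)

lemma norm_term_lt_one {N' : ℕ} (χ : DirichletCharacter ℂ N') {q : ℕ} (hq : 2 ≤ q) {w : ℂ}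
    (hw : 1 < w.re) : ‖χ q * (q : ℂ) ^ (-w)‖ < 1 := by
  rw [norm_mul]
  calc ‖χ q‖ * ‖(q : ℂ) ^ (-w)‖ ≤ 1 * ‖(q : ℂ) ^ (-w)‖ := by
        gcongr; exact χ.norm_le_one _
    _ = (q : ℝ) ^ (-w.re) := by
        rw [one_mul, Complex.norm_natCast_cpow_of_pos (by omega), Complex.neg_re]
    _ < 1 := Real.rpow_lt_one_of_one_lt_of_neg (by exact_mod_cast hq.trans_lt' one_lt_two) (by linarith)

lemma norm_term2_lt_one {N' : ℕ} (χ : DirichletCharacter ℂ N') {q : ℕ} (hq : 2 ≤ q) {w : ℂ}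
    (hw : 2 < w.re) : ‖χ q * ((q : ℂ) * (q : ℂ) ^ (-w))‖ < 1 := by
  have hq1 : (1 : ℝ) < q := by exact_mod_cast hq.trans_lt' one_lt_two
  rw [norm_mul, norm_mul]
  calc ‖χ q‖ * (‖(q : ℂ)‖ * ‖(q : ℂ) ^ (-w)‖) ≤ 1 * (‖(q : ℂ)‖ * ‖(q : ℂ) ^ (-w)‖) := by
        gcongr; exact χ.norm_le_one _
    _ = (q : ℝ) ^ (1 - w.re) := by
        rw [one_mul, Complex.norm_natCast, Complex.norm_natCast_cpow_of_pos (by omega),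
          Complex.neg_re, show (1 : ℝ) - w.re = 1 + -w.re by ring,
          Real.rpow_add (by linarith) , Real.rpow_one]
    _ < 1 := Real.rpow_lt_one_of_one_lt_of_neg hq1 (by linarith)

lemma one_sub_ne_zero_of_norm_lt_one {x : ℂ} (h : ‖x‖ < 1) : (1 : ℂ) - x ≠ 0 := by
  intro hx
  have : x = 1 := by linear_combination -hx
  rw [this] at h
  simp at h


lemma norm_summable_aux {N' : ℕ} (lam : ℕ) (χ : DirichletCharacter ℂ N') {w : ℂ}
    (hw : 2 < w.re) :
    Summable (fun m : ℕ => ‖χ m * (Nat.totient (lam * m) : ℂ) * (m : ℂ) ^ (-w)‖) := by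
  have hsum2 : Summable (fun m : ℕ => (lam : ℝ) * ((m : ℝ) ^ (w.re - 1))⁻¹) :=
    ((Real.summable_nat_rpow_inv).mpr (by linarith)).mul_left _
  refine Summable.of_nonneg_of_le (fun m => norm_nonneg _) (fun m => ?_) hsum2
  rcases Nat.eq_zero_or_pos m with rfl | hm
  · simp only [Nat.mul_zero, Nat.totient_zero, Nat.cast_zero, mul_zero, zero_mul, norm_zero]
    positivity
  · have hm0 : (0 : ℝ) < m := by exact_mod_cast hm
    calc ‖χ m * (Nat.totient (lam * m) : ℂ) * (m : ℂ) ^ (-w)‖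
        = ‖χ m‖ * (Nat.totient (lam * m) : ℝ) * (m : ℝ) ^ (-w.re) := by
          rw [norm_mul, norm_mul, Complex.norm_natCast,
            Complex.norm_natCast_cpow_of_pos hm, Complex.neg_re]
      _ ≤ 1 * ((lam * m : ℕ) : ℝ) * (m : ℝ) ^ (-w.re) := by
          gcongr
          · exact χ.norm_le_one _
          · exact_mod_cast Nat.totient_le _
      _ = (lam : ℝ) * ((m : ℝ) ^ (1 - w.re)) := by
          push_cast
          rw [show (1 : ℝ) - w.re = 1 + -w.re by ring, Real.rpow_add hm0, Real.rpow_one]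
          ring
      _ = (lam : ℝ) * ((m : ℝ) ^ (w.re - 1))⁻¹ := by
          rw [← Real.rpow_neg (le_of_lt hm0), neg_sub]

lemma key_lemma {N' : ℕ} (lam : ℕ) (hlam : lam ≠ 0) (χ : DirichletCharacter ℂ N') {w : ℂ}
    (hw : 2 < w.re) :
    ∑' m : ℕ, χ m * (Nat.totient (lam * m) : ℂ) * (m : ℂ) ^ (-w)
      = (Nat.totient lam : ℂ) *
          (LSeries (fun k : ℕ => χ k) (w - 1) / LSeries (fun k : ℕ => χ k) w) *
          ∏ p ∈ Nat.primeFactors lam, (1 - χ p * (p : ℂ) ^ (-w))⁻¹ := by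
  classical
  have hphl : (Nat.totient lam : ℂ) ≠ 0 :=
    Nat.cast_ne_zero.mpr (Nat.totient_pos.mpr (Nat.pos_of_ne_zero hlam)).ne'
  have hw1 : 1 < w.re := by linarith
  have hw1' : 1 < (w - 1).re := by
    rw [Complex.sub_re, Complex.one_re]; linarith
  set f : ℕ → ℂ :=
    fun n => χ n * (Nat.totient (lam * n) : ℂ) * (n : ℂ) ^ (-w) / (Nat.totient lam : ℂ) with hf
  have hf₁ : f 1 = 1 := by
    simp only [hf, Nat.cast_one, map_one, one_mul, Complex.one_cpow, mul_one]
    exact div_self hphl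
  have hf₀ : f 0 = 0 := by simp [hf]
  have hmul : ∀ {m n : ℕ}, Nat.Coprime m n → f (m * n) = f m * f n := by
    intro m n hmn
    have key := congrArg (Nat.cast : ℕ → ℂ) (totient_aux hlam hmn)
    push_cast at key
    simp only [hf]
    rw [show ((m * n : ℕ) : ZMod N') = (m : ZMod N') * n by push_cast; ring, map_mul,
      aux_cast_mul_cpow]
    field_simp
    linear_combination (χ (m : ZMod N') * χ (n : ZMod N') * (m : ℂ) ^ (-w) * (n : ℂ) ^ (-w)
      ) * key
  have hsum : Summable fun n => ‖f n‖ := by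
    have h := (norm_summable_aux lam χ hw).div_const ‖(Nat.totient lam : ℂ)‖
    refine h.congr fun n => ?_
    rw [hf]
    simp [norm_div]
  have hE := EulerProduct.eulerProduct_hasProd hf₁ (fun {m n} h => hmul h) hsum hf₀
  -- local factors
  have hloc1 : ∀ p : Nat.Primes, (p : ℕ) ∣ lam →
      (∑' e : ℕ, f ((p : ℕ) ^ e))
        = (1 - χ ((p : ℕ) : ZMod N') * (((p : ℕ) : ℂ) * ((p : ℕ) : ℂ) ^ (-w)))⁻¹ := by
    intro p hdvd
    have hfe : ∀ e : ℕ, f ((p : ℕ) ^ e)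
        = (χ ((p : ℕ) : ZMod N') * (((p : ℕ) : ℂ) * ((p : ℕ) : ℂ) ^ (-w))) ^ e := by
      intro e
      simp only [hf]
      rw [totient_lam_pow_of_dvd p.2 hdvd e, aux_cast_pow_cpow,
        show (((p : ℕ) ^ e : ℕ) : ZMod N') = (((p : ℕ) : ZMod N')) ^ e by push_cast; ring,
        map_pow]
      push_cast
      field_simp
      ring
    rw [tsum_congr hfe, tsum_geometric_of_norm_lt_one (norm_term2_lt_one χ p.2.two_le hw)]
  have hloc2 : ∀ p : Nat.Primes, ¬ ((p : ℕ) ∣ lam) →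
      (∑' e : ℕ, f ((p : ℕ) ^ e))
        = (1 - χ ((p : ℕ) : ZMod N') * ((p : ℕ) : ℂ) ^ (-w)) *
          (1 - χ ((p : ℕ) : ZMod N') * (((p : ℕ) : ℂ) * ((p : ℕ) : ℂ) ^ (-w)))⁻¹ := by
    intro p hdvd
    have hfe : ∀ e : ℕ, f ((p : ℕ) ^ e)
        = (Nat.totient ((p : ℕ) ^ e) : ℂ) *
            (χ ((p : ℕ) : ZMod N') * ((p : ℕ) : ℂ) ^ (-w)) ^ e := by
      intro e
      simp only [hf]
      rw [totient_lam_pow_of_not_dvd p.2 hdvd e, aux_cast_pow_cpow,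
        show (((p : ℕ) ^ e : ℕ) : ZMod N') = (((p : ℕ) : ZMod N')) ^ e by push_cast; ring,
        map_pow]
      push_cast
      field_simp
      ring
    have hsumm : Summable fun e : ℕ => f ((p : ℕ) ^ e) :=
      hsum.of_norm.comp_injective (Nat.pow_right_injective p.2.two_le)
    have hy := norm_term2_lt_one χ p.2.two_le hw
    have h1y := one_sub_ne_zero_of_norm_lt_one hy
    rw [Summable.tsum_eq_zero_add hsumm]
    have h0 : f ((p : ℕ) ^ 0) = 1 := by rw [pow_zero]; exact hf₁
    have h1 : ∀ e : ℕ, f ((p : ℕ) ^ (e + 1))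
        = ((((p : ℕ) : ℂ) - 1) * (χ ((p : ℕ) : ZMod N') * ((p : ℕ) : ℂ) ^ (-w))) *
            (χ ((p : ℕ) : ZMod N') * (((p : ℕ) : ℂ) * ((p : ℕ) : ℂ) ^ (-w))) ^ e := by
      intro e
      rw [hfe, Nat.totient_prime_pow p.2 (Nat.succ_pos e)]
      have hcast : ((((p : ℕ)) ^ (e + 1 - 1) * ((p : ℕ) - 1) : ℕ) : ℂ)
          = (((p : ℕ) : ℂ)) ^ e * (((p : ℕ) : ℂ) - 1) := by
        push_cast [Nat.cast_sub p.2.one_lt.le]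
        simp
      rw [hcast, pow_succ, mul_pow, mul_pow]
      ring
    rw [h0, tsum_congr h1, tsum_mul_left,
      tsum_geometric_of_norm_lt_one hy]
    field_simp
    linear_combination -(inv_mul_cancel₀ h1y)
  -- the finite product as a HasProd over primes
  set P0 : ℂ := ∏ q ∈ lam.primeFactors, (1 - χ (q : ZMod N') * (q : ℂ) ^ (-w)) with hP0
  have hP : HasProd
      (fun p : Nat.Primes =>
        if (p : ℕ) ∈ lam.primeFactors then 1 - χ ((p : ℕ) : ZMod N') * ((p : ℕ) : ℂ) ^ (-w)
        else 1) P0 := by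
    have h := hasProd_prod_of_ne_finset_one (L := SummationFilter.unconditional Nat.Primes)
      (s := lam.primeFactors.preimage (Subtype.val : Nat.Primes → ℕ)
        Subtype.val_injective.injOn)
      (f := fun p : Nat.Primes =>
        if (p : ℕ) ∈ lam.primeFactors then 1 - χ ((p : ℕ) : ZMod N') * ((p : ℕ) : ℂ) ^ (-w)
        else 1)
      (fun p hp => if_neg (fun hmem => hp (Finset.mem_preimage.mpr hmem)))
    convert h using 1
    rw [hP0, ← Finset.prod_preimage (Subtype.val : Nat.Primes → ℕ) lam.primeFactors
      Subtype.val_injective.injOn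
      (fun q => 1 - χ (q : ZMod N') * (q : ℂ) ^ (-w))
      (fun q hq hq' => absurd ⟨⟨q, Nat.prime_of_mem_primeFactors hq⟩, rfl⟩ hq')]
    exact Finset.prod_congr rfl fun p hp => (if_pos (Finset.mem_preimage.mp hp)).symm
  have hB := DirichletCharacter.LSeries_eulerProduct_hasProd χ (s := w) hw1
  have hD := hB.mul hP
  have hA0 := DirichletCharacter.LSeries_eulerProduct_hasProd χ (s := w - 1) hw1'
  have hA : HasProd
      (fun p : Nat.Primes =>
        (1 - χ ((p : ℕ) : ZMod N') * (((p : ℕ) : ℂ) * ((p : ℕ) : ℂ) ^ (-w)))⁻¹)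
      (LSeries (fun k : ℕ => χ k) (w - 1)) := by
    have hfun : (fun p : Nat.Primes =>
        (1 - χ ((p : ℕ) : ZMod N') * ((p : ℕ) : ℂ) ^ (-(w - 1)))⁻¹)
        = fun p : Nat.Primes =>
        (1 - χ ((p : ℕ) : ZMod N') * (((p : ℕ) : ℂ) * ((p : ℕ) : ℂ) ^ (-w)))⁻¹ := by
      funext p
      rw [show -(w - 1) = 1 + -w by ring,
        Complex.cpow_add _ _ (by exact_mod_cast p.2.pos.ne' : ((p : ℕ) : ℂ) ≠ 0),
        Complex.cpow_one]
    exact hfun ▸ hA0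
  have hcomb : HasProd
      (fun p : Nat.Primes =>
        (1 - χ ((p : ℕ) : ZMod N') * (((p : ℕ) : ℂ) * ((p : ℕ) : ℂ) ^ (-w)))⁻¹)
      ((∑' n : ℕ, f n) * (LSeries (fun k : ℕ => χ k) w * P0)) := by
    have h := hE.mul hD
    have hfun : (fun p : Nat.Primes => (∑' e : ℕ, f ((p : ℕ) ^ e)) *
        ((1 - χ ((p : ℕ) : ZMod N') * ((p : ℕ) : ℂ) ^ (-w))⁻¹ *
          (if (p : ℕ) ∈ lam.primeFactors
            then 1 - χ ((p : ℕ) : ZMod N') * ((p : ℕ) : ℂ) ^ (-w) else 1)))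
        = fun p : Nat.Primes =>
          (1 - χ ((p : ℕ) : ZMod N') * (((p : ℕ) : ℂ) * ((p : ℕ) : ℂ) ^ (-w)))⁻¹ := by
      funext p
      have hx := norm_term_lt_one χ p.2.two_le hw1
      have h1x := one_sub_ne_zero_of_norm_lt_one hx
      by_cases hdvd : (p : ℕ) ∣ lam
      · rw [hloc1 p hdvd, if_pos (Nat.mem_primeFactors.mpr ⟨p.2, hdvd, hlam⟩),
          inv_mul_cancel₀ h1x, mul_one]
      · rw [hloc2 p hdvd, if_neg (fun hmem => hdvd (Nat.dvd_of_mem_primeFactors hmem)),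
          mul_one]
        have h1y := one_sub_ne_zero_of_norm_lt_one (norm_term2_lt_one χ p.2.two_le hw)
        field_simp
    exact hfun ▸ h
  have hfinal := hA.unique hcomb
  have hT : (∑' m : ℕ, χ m * (Nat.totient (lam * m) : ℂ) * (m : ℂ) ^ (-w))
      = (Nat.totient lam : ℂ) * ∑' n : ℕ, f n := by
    rw [← tsum_mul_left]
    refine tsum_congr fun n => ?_
    simp only [hf]
    field_simp
  have hLw : LSeries (fun k : ℕ => χ k) w ≠ 0 :=
    DirichletCharacter.LSeries_ne_zero_of_one_lt_re χ hw1
  have hPne : P0 ≠ 0 := by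
    rw [hP0]
    exact Finset.prod_ne_zero_iff.mpr fun q hq =>
      one_sub_ne_zero_of_norm_lt_one
        (norm_term_lt_one χ (Nat.prime_of_mem_primeFactors hq).two_le hw1)
  rw [hT, Finset.prod_inv_distrib, ← hP0, hfinal]
  field_simp

set_option maxHeartbeats 1000000 in
/-- The Dirichlet series `∑_{c ≡ β (mod N)} φ(c) c^{−2s}` expressed via Dirichlet `L`-functions
of characters modulo `N/λ`, where `λ = gcd(N, β)`. -/
theorem stmt12 (N β : ℕ) (hN : 0 < N) (hβ : 0 < β)
    (lam : ℕ) (hlam : lam = Nat.gcd N β) (s : ℂ) (hs : 1 < s.re) :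
    ∑' c : {c : ℕ // 0 < c ∧ c % N = β % N},
        (Nat.totient c : ℂ) * (c : ℂ) ^ (-(2 * s))
      = (Nat.totient (N / lam) : ℂ)⁻¹ *
          ∑ χ : DirichletCharacter ℂ (N / lam),
            (χ ((β / lam : ℕ) : ZMod (N / lam)))⁻¹ *
              ((Nat.totient lam : ℂ) / (lam : ℂ) ^ (2 * s)) *
              (LSeries (fun k : ℕ => χ (k : ZMod (N / lam))) (2 * s - 1) /
                LSeries (fun k : ℕ => χ (k : ZMod (N / lam))) (2 * s)) *
              ∏ p ∈ Nat.primeFactors lam, (1 - χ ((p : ℕ) : ZMod (N / lam)) * (p : ℂ) ^ (-(2 * s)))⁻¹ := by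
  classical
  have hlam0 : lam ≠ 0 := by
    rw [hlam]
    exact (Nat.gcd_pos_of_pos_left β hN).ne'
  have hlampos : 0 < lam := Nat.pos_of_ne_zero hlam0
  have hNd : lam ∣ N := hlam ▸ Nat.gcd_dvd_left N β
  have hβd : lam ∣ β := hlam ▸ Nat.gcd_dvd_right N β
  set N' := N / lam with hN'
  set b' := β / lam with hb'
  have hNe : lam * N' = N := Nat.mul_div_cancel' hNd
  have hbe : lam * b' = β := Nat.mul_div_cancel' hβd
  have hN'0 : N' ≠ 0 := by
    intro h
    rw [h, mul_zero] at hNe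
    exact hN.ne' hNe.symm
  haveI : NeZero N' := ⟨hN'0⟩
  have hcop : Nat.Coprime b' N' := by
    rw [hb', hN', hlam]
    exact (Nat.coprime_div_gcd_div_gcd (hlam ▸ hlampos)).symm
  have hunit : IsUnit ((b' : ZMod N')) := (ZMod.isUnit_iff_coprime b' N').mpr hcop
  have hphN' : (Nat.totient N' : ℂ) ≠ 0 :=
    Nat.cast_ne_zero.mpr (Nat.totient_pos.mpr (Nat.pos_of_ne_zero hN'0)).ne'
  have hw : 2 < (2 * s).re := by
    have h2 : (2 * s).re = 2 * s.re := by simp [Complex.mul_re]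
    rw [h2]; linarith
  set F : ℕ → ℂ := fun c => (Nat.totient c : ℂ) * (c : ℂ) ^ (-(2 * s)) with hF
  set S : Set ℕ := {c | 0 < c ∧ c % N = β % N} with hS
  have hdvd_of_mem : ∀ c, c ∈ S → lam ∣ c := by
    intro c hc
    have h2 : c ≡ β [MOD lam] := Nat.ModEq.of_dvd hNd hc.2
    have h4 : β ≡ 0 [MOD lam] := (Nat.modEq_zero_iff_dvd).mpr hβd
    exact (Nat.modEq_zero_iff_dvd).mp (h2.trans h4)
  have hsub : (∑' c : {c : ℕ // 0 < c ∧ c % N = β % N},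
      (Nat.totient (c : ℕ) : ℂ) * ((c : ℕ) : ℂ) ^ (-(2 * s))) = ∑' c : ℕ, S.indicator F c :=
    tsum_subtype S F
  have hreindex : (∑' c : ℕ, S.indicator F c) = ∑' m : ℕ, S.indicator F (lam * m) := by
    refine (Function.Injective.tsum_eq (g := fun m : ℕ => lam * m) ?_ ?_).symm
    · intro a b h
      exact Nat.eq_of_mul_eq_mul_left hlampos h
    · intro c hc
      have hmem : c ∈ S := by
        by_contra h
        exact hc (Set.indicator_of_notMem h F)
      obtain ⟨d, hd⟩ := hdvd_of_mem c hmem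
      exact ⟨d, hd.symm⟩
  have hinv : ∀ χ : DirichletCharacter ℂ N', χ (((b' : ZMod N'))⁻¹) = (χ (b' : ZMod N'))⁻¹ := by
    intro χ
    have h1 : χ ((b' : ZMod N')⁻¹) * χ (b' : ZMod N') = 1 := by
      rw [← map_mul, ZMod.inv_mul_of_unit _ hunit, map_one]
    exact (inv_eq_of_mul_eq_one_left h1).symm
  have hterm : ∀ m : ℕ, S.indicator F (lam * m)
      = (Nat.totient N' : ℂ)⁻¹ * ∑ χ : DirichletCharacter ℂ N',
          (χ ((b' : ℕ) : ZMod N'))⁻¹ *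
            (χ ((m : ℕ) : ZMod N') * (Nat.totient (lam * m) : ℂ) *
              ((lam * m : ℕ) : ℂ) ^ (-(2 * s))) := by
    intro m
    have horth := DirichletCharacter.sum_char_inv_mul_char_eq ℂ (n := N') hunit (m : ZMod N')
    have hsum' : (∑ χ : DirichletCharacter ℂ N',
        (χ ((b' : ℕ) : ZMod N'))⁻¹ *
          (χ ((m : ℕ) : ZMod N') * (Nat.totient (lam * m) : ℂ) *
            ((lam * m : ℕ) : ℂ) ^ (-(2 * s))))
        = (∑ χ : DirichletCharacter ℂ N', χ (((b' : ZMod N'))⁻¹) * χ ((m : ℕ) : ZMod N')) *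
            ((Nat.totient (lam * m) : ℂ) * ((lam * m : ℕ) : ℂ) ^ (-(2 * s))) := by
      rw [Finset.sum_mul]
      refine Finset.sum_congr rfl fun χ _ => ?_
      rw [hinv χ]
      ring
    rcases Nat.eq_zero_or_pos m with rfl | hm
    · rw [Set.indicator_of_notMem (by simp [hS] : (lam * 0) ∉ S)]
      simp
    · have hcondeq : (lam * m ∈ S) ↔ ((b' : ZMod N') = (m : ZMod N')) := by
        rw [hS, Set.mem_setOf_eq, ZMod.natCast_eq_natCast_iff]
        constructor
        · rintro ⟨-, h2⟩
          have h3 : lam * m ≡ lam * b' [MOD lam * N'] := by rw [hNe, hbe]; exact h2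
          exact (Nat.ModEq.mul_left_cancel' hlam0 h3).symm
        · intro h
          refine ⟨Nat.mul_pos hlampos hm, ?_⟩
          have h3 : lam * m ≡ lam * b' [MOD lam * N'] := Nat.ModEq.mul_left' lam h.symm
          rw [hNe, hbe] at h3
          exact h3
      by_cases hcond : (b' : ZMod N') = (m : ZMod N')
      · rw [Set.indicator_of_mem (hcondeq.mpr hcond), hsum', horth, if_pos hcond, hF,
          ← mul_assoc, inv_mul_cancel₀ hphN', one_mul]
      · rw [Set.indicator_of_notMem (fun hmem => hcond (hcondeq.mp hmem)), hsum', horth,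
          if_neg hcond, zero_mul, mul_zero]
  have hsummable : ∀ χ : DirichletCharacter ℂ N',
      Summable (fun m : ℕ => (χ ((b' : ℕ) : ZMod N'))⁻¹ *
        (χ ((m : ℕ) : ZMod N') * (Nat.totient (lam * m) : ℂ) *
          ((lam * m : ℕ) : ℂ) ^ (-(2 * s)))) := by
    intro χ
    have h0 : Summable (fun m : ℕ =>
        χ m * (Nat.totient (lam * m) : ℂ) * (m : ℂ) ^ (-(2 * s))) :=
      (norm_summable_aux lam χ hw).of_norm
    refine (h0.mul_left ((χ ((b' : ℕ) : ZMod N'))⁻¹ * (lam : ℂ) ^ (-(2 * s)))).congr fun m => ?_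
    rw [aux_cast_mul_cpow]
    ring
  calc (∑' c : {c : ℕ // 0 < c ∧ c % N = β % N},
      (Nat.totient (c : ℕ) : ℂ) * ((c : ℕ) : ℂ) ^ (-(2 * s)))
      = ∑' c : ℕ, S.indicator F c := hsub
    _ = ∑' m : ℕ, S.indicator F (lam * m) := hreindex
    _ = ∑' m : ℕ, (Nat.totient N' : ℂ)⁻¹ * ∑ χ : DirichletCharacter ℂ N',
          (χ ((b' : ℕ) : ZMod N'))⁻¹ *
            (χ ((m : ℕ) : ZMod N') * (Nat.totient (lam * m) : ℂ) *
              ((lam * m : ℕ) : ℂ) ^ (-(2 * s))) := tsum_congr hterm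
    _ = (Nat.totient N' : ℂ)⁻¹ * ∑' m : ℕ, ∑ χ : DirichletCharacter ℂ N',
          (χ ((b' : ℕ) : ZMod N'))⁻¹ *
            (χ ((m : ℕ) : ZMod N') * (Nat.totient (lam * m) : ℂ) *
              ((lam * m : ℕ) : ℂ) ^ (-(2 * s))) := tsum_mul_left
    _ = (Nat.totient N' : ℂ)⁻¹ * ∑ χ : DirichletCharacter ℂ N', ∑' m : ℕ,
          (χ ((b' : ℕ) : ZMod N'))⁻¹ *
            (χ ((m : ℕ) : ZMod N') * (Nat.totient (lam * m) : ℂ) *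
              ((lam * m : ℕ) : ℂ) ^ (-(2 * s))) := by
        rw [Summable.tsum_finsetSum fun χ _ => hsummable χ]
    _ = (Nat.totient N' : ℂ)⁻¹ *
          ∑ χ : DirichletCharacter ℂ N',
            (χ ((b' : ℕ) : ZMod N'))⁻¹ *
              ((Nat.totient lam : ℂ) / (lam : ℂ) ^ (2 * s)) *
              (LSeries (fun k : ℕ => χ (k : ZMod N')) (2 * s - 1) /
                LSeries (fun k : ℕ => χ (k : ZMod N')) (2 * s)) *
              ∏ p ∈ Nat.primeFactors lam,
                (1 - χ ((p : ℕ) : ZMod N') * (p : ℂ) ^ (-(2 * s)))⁻¹ := by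
        congr 1
        refine Finset.sum_congr rfl fun χ _ => ?_
        have h0 : Summable (fun m : ℕ =>
            χ m * (Nat.totient (lam * m) : ℂ) * (m : ℂ) ^ (-(2 * s))) :=
          (norm_summable_aux lam χ hw).of_norm
        have hstep : (∑' m : ℕ, (χ ((b' : ℕ) : ZMod N'))⁻¹ *
            (χ ((m : ℕ) : ZMod N') * (Nat.totient (lam * m) : ℂ) *
              ((lam * m : ℕ) : ℂ) ^ (-(2 * s))))
            = ((χ ((b' : ℕ) : ZMod N'))⁻¹ * (lam : ℂ) ^ (-(2 * s))) *
              ∑' m : ℕ, χ m * (Nat.totient (lam * m) : ℂ) * (m : ℂ) ^ (-(2 * s)) := by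
          rw [← tsum_mul_left]
          refine tsum_congr fun m => ?_
          rw [aux_cast_mul_cpow]
          ring
        rw [hstep, key_lemma lam hlam0 χ hw, show (2 : ℂ) * s - 1 = 2 * s - 1 from rfl,
          Complex.cpow_neg]
        field_simp
end

section
/- Let F be a field in which 6 ≠ 0 (characteristic not 2 or 3), and let N, x, y ∈ F with N ≠ 0, x ≠ 0, and y² = x³ − 27N². Set X := (9N + y)/(3x) and Y := (9N − y)/(3x). Then X³ + Y³ = 2N, X + Y ≠ 0, x = 6N/(X + Y), and y = 9N(X − Y)/(X + Y). Conversely, if X, Y ∈ F satisfy X³ + Y³ = 2N with N ≠ 0 and X + Y ≠ 0, then x := 6N/(X + Y) and y := 9N(X − Y)/(X + Y) satisfy x ≠ 0 and y² = x³ − 27N², and ((9N + y)/(3x), (9N − y)/(3x)) = (X, Y). In other words, these formulas define mutually inverse bijections between {(x,y) ∈ F² : y² = x³ − 27N², x ≠ 0} and {(X,Y) ∈ F² : X³ + Y³ = 2N, X + Y ≠ 0}. -/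
/-- The affine part of the isomorphism `φ_N : E_{-27N²} → Ẽ_{2N}` between the elliptic curve
`y² = x³ - 27N²` and the cubic curve `X³ + Y³ = 2N`, together with its inverse. -/
theorem stmt14 {F : Type*} [Field F] (h6 : (6 : F) ≠ 0) (N : F) (hN : N ≠ 0) :
    (∀ x y : F, x ≠ 0 → y ^ 2 = x ^ 3 - 27 * N ^ 2 →
      ((9 * N + y) / (3 * x)) ^ 3 + ((9 * N - y) / (3 * x)) ^ 3 = 2 * N ∧
      (9 * N + y) / (3 * x) + (9 * N - y) / (3 * x) ≠ 0 ∧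
      x = 6 * N / ((9 * N + y) / (3 * x) + (9 * N - y) / (3 * x)) ∧
      y = 9 * N * ((9 * N + y) / (3 * x) - (9 * N - y) / (3 * x)) /
            ((9 * N + y) / (3 * x) + (9 * N - y) / (3 * x))) ∧
    (∀ X Y : F, X ^ 3 + Y ^ 3 = 2 * N → X + Y ≠ 0 →
      6 * N / (X + Y) ≠ 0 ∧
      (9 * N * (X - Y) / (X + Y)) ^ 2 = (6 * N / (X + Y)) ^ 3 - 27 * N ^ 2 ∧
      (9 * N + 9 * N * (X - Y) / (X + Y)) / (3 * (6 * N / (X + Y))) = X ∧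
      (9 * N - 9 * N * (X - Y) / (X + Y)) / (3 * (6 * N / (X + Y))) = Y) := by
  have h2 : (2 : F) ≠ 0 := fun h => h6 (by rw [show (6:F) = 2*3 by norm_num, h, zero_mul])
  have h3 : (3 : F) ≠ 0 := fun h => h6 (by rw [show (6:F) = 2*3 by norm_num, h, mul_zero])
  constructor
  · intro x y hx hy
    have hsum : (9 * N + y) / (3 * x) + (9 * N - y) / (3 * x) = 6 * N / x := by
      field_simp; ring
    have hdiff : (9 * N + y) / (3 * x) - (9 * N - y) / (3 * x) = 2 * y / (3 * x) := by
      field_simp; ring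
    have hsne : 6 * N / x ≠ 0 := div_ne_zero (mul_ne_zero h6 hN) hx
    refine ⟨?_, hsum ▸ hsne, ?_, ?_⟩
    · have key : (9 * N + y) ^ 3 + (9 * N - y) ^ 3 = 2 * N * (3 * x) ^ 3 := by
        linear_combination 54 * N * hy
      rw [div_pow, div_pow, ← add_div, key, mul_div_assoc,
        div_self (pow_ne_zero 3 (mul_ne_zero h3 hx)), mul_one]
    · rw [hsum]
      field_simp
    · rw [hsum, hdiff]
      field_simp
      ring
  · intro X Y hXY hs
    refine ⟨div_ne_zero (mul_ne_zero h6 hN) hs, ?_, ?_, ?_⟩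
    · field_simp
      ring_nf
      linear_combination 108 * hXY
    · field_simp
      ring
    · field_simp
      ring
end

section
/- Let ω be a primitive cube root of unity and let 𝒪 = ℤ[ω] be the ring of Eisenstein integers (the ring of integers of ℚ(ω)). Let d be a positive integer coprime to 3. Then the quotient of the unit group (𝒪/d𝒪)^× by the image of (ℤ/dℤ)^× (under the natural ring map ℤ/dℤ → 𝒪/d𝒪, which sends units to units) is a finite group of cardinality d·Π_{p | d} (1 − χ₃(p)/p) = Π_{p^e ∥ d} p^{e−1}(p − χ₃(p)), where the product is over the primes p dividing d and χ₃(p) = +1 if p ≡ 1 (mod 3), χ₃(p) = −1 if p ≡ 2 (mod 3). -/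
set_option synthInstance.maxHeartbeats 1000000
set_option maxHeartbeats 2000000

section NF
def nf {A : Type*} [CommRing A] (x : A × A) : A := x.1^2 - x.1*x.2 + x.2^2

lemma nf_mul {A : Type*} [CommRing A] (x y : A × A) :
    nf (x.1*y.1 - x.2*y.2, x.1*y.2 + x.2*y.1 - x.2*y.2) = nf x * nf y := by
  simp only [nf]; ring

lemma isUnit_prod {α β : Type*} [Monoid α] [Monoid β] (x : α × β) :
    IsUnit x ↔ IsUnit x.1 ∧ IsUnit x.2 := by
  constructor
  · rintro ⟨u, rfl⟩
    refine ⟨⟨Units.map (MonoidHom.fst _ _) u, ?_⟩, ⟨Units.map (MonoidHom.snd _ _) u, ?_⟩⟩ <;> simp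
  · rintro ⟨⟨u, hu⟩, ⟨v, hv⟩⟩
    refine ⟨⟨(u.val, v.val), (u.inv, v.inv), ?_, ?_⟩, ?_⟩
    · ext <;> simp
    · ext <;> simp
    · ext <;> simp [hu, hv]

noncomputable def Nd (d : ℕ) : ℕ := Nat.card {x : ZMod d × ZMod d // IsUnit (nf x)}

lemma Nd_one : Nd 1 = 1 := by
  have h1 : Subsingleton {x : ZMod 1 × ZMod 1 // IsUnit (nf x)} := by
    constructor; intro a b; ext : 1; exact Subsingleton.elim _ _
  have h2 : Nonempty {x : ZMod 1 × ZMod 1 // IsUnit (nf x)} := ⟨⟨(0,0), isUnit_of_subsingleton _⟩⟩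
  rw [Nd, Nat.card_eq_one_iff_unique]
  exact ⟨h1, h2⟩

lemma Nd_mul : ∀ m n : ℕ, Nat.Coprime m n → Nd (m * n) = Nd m * Nd n := by
  intro m n h
  rcases eq_or_ne m 0 with rfl | hm
  · rw [Nat.coprime_zero_left] at h; subst h; simp [Nd_one]
  rcases eq_or_ne n 0 with rfl | hn
  · rw [Nat.coprime_zero_right] at h; subst h; simp [Nd_one]
  classical
  let χ := ZMod.chineseRemainder h
  let e : (ZMod (m*n) × ZMod (m*n)) ≃ (ZMod m × ZMod m) × (ZMod n × ZMod n) :=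
    (Equiv.prodCongr χ.toEquiv χ.toEquiv).trans (Equiv.prodProdProdComm _ _ _ _)
  have key : ∀ x : ZMod (m*n) × ZMod (m*n),
      IsUnit (nf x) ↔ (fun y : (ZMod m × ZMod m) × (ZMod n × ZMod n) =>
        IsUnit (nf y.1) ∧ IsUnit (nf y.2)) (e x) := by
    intro x
    have h1 : χ (nf x) = (nf (e x).1, nf (e x).2) := by
      simp only [nf, e, Equiv.trans_apply, Equiv.prodCongr_apply, Equiv.prodProdProdComm_apply,
        RingEquiv.toEquiv_eq_coe, EquivLike.coe_coe, Prod.map_apply]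
      ext <;> simp [map_pow, map_mul, map_sub, map_add] <;> rfl
    have h2 : IsUnit (χ (nf x)) ↔ IsUnit (nf x) :=
      ⟨fun hx => by simpa using hx.map χ.symm, fun hx => hx.map χ⟩
    rw [← h2, h1, isUnit_prod]
  calc Nd (m*n) = Nat.card ({y : ZMod m × ZMod m // IsUnit (nf y)} ×
        {z : ZMod n × ZMod n // IsUnit (nf z)}) := by
        refine Nat.card_congr ((Equiv.subtypeEquiv e key).trans Equiv.subtypeProdEquivProd)
    _ = Nd m * Nd n := by rw [Nat.card_prod]; rfl

def fiberEquiv {A B : Type*} [AddCommGroup A] [AddCommGroup B] (f : A →+ B)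
    (g : B → A) (hg : ∀ y, f (g y) = y) (P : B → Prop) :
    {x : A // P (f x)} ≃ {y : B // P y} × {x : A // f x = 0} where
  toFun x := (⟨f x.1, x.2⟩, ⟨x.1 - g (f x.1), by simp [hg]⟩)
  invFun yk := ⟨g yk.1.1 + yk.2.1, by simpa [hg, yk.2.2] using yk.1.2⟩
  left_inv x := by ext; simp
  right_inv yk := by
    ext
    · simp [hg, yk.2.2]
    · simp [hg, yk.2.2]

lemma card_subtype_comp {A B : Type*} [AddCommGroup A] [AddCommGroup B] (f : A →+ B)
    (hf : Function.Surjective f) (P : B → Prop) :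
    Nat.card {x : A // P (f x)} = Nat.card {y : B // P y} * Nat.card {x : A // f x = 0} := by
  rw [Nat.card_congr (fiberEquiv f (Function.surjInv hf) (Function.surjInv_eq hf) P), Nat.card_prod]

-- kernel size of the cast map
lemma card_ker_cast {p : ℕ} (hp : p.Prime) {e : ℕ} (he : 1 ≤ e) :
    Nat.card {z : ZMod (p^e) // ZMod.castHom (dvd_pow_self p (by omega : e ≠ 0)) (ZMod p) z = 0}
      = p^(e-1) := by
  have hπs : Function.Surjective (ZMod.castHom (dvd_pow_self p (by omega : e ≠ 0)) (ZMod p)) :=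
    ZMod.ringHom_surjective _
  have h := card_subtype_comp
    (ZMod.castHom (dvd_pow_self p (by omega : e ≠ 0)) (ZMod p)).toAddMonoidHom hπs (fun _ => True)
  simp only [RingHom.toAddMonoidHom_eq_coe, AddMonoidHom.coe_coe] at h
  rw [Nat.card_congr (Equiv.subtypeUnivEquiv fun _ => trivial),
      Nat.card_congr (Equiv.subtypeUnivEquiv fun _ => trivial)] at h
  rw [Nat.card_zmod, Nat.card_zmod] at h
  have hp0 : 0 < p := hp.pos
  have : p^e = p * p^(e-1) := by
    conv_lhs => rw [show e = 1 + (e-1) by omega]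
    rw [pow_add, pow_one]
  exact Nat.eq_of_mul_eq_mul_left hp0 (h.symm.trans this)

lemma isUnit_zmod_pow_iff {p : ℕ} (hp : p.Prime) {e : ℕ} (he : 1 ≤ e) (z : ZMod (p^e)) :
    IsUnit z ↔ IsUnit (ZMod.castHom (dvd_pow_self p (by omega : e ≠ 0)) (ZMod p) z) := by
  have : NeZero (p^e) := ⟨pow_ne_zero e hp.pos.ne'⟩
  have hz : ((z.val : ℕ) : ZMod (p^e)) = z := ZMod.natCast_rightInverse z
  have hπz : ZMod.castHom (dvd_pow_self p (by omega : e ≠ 0)) (ZMod p) z = ((z.val : ℕ) : ZMod p) := by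
    rw [← hz]; simp [map_natCast]
  rw [hπz]
  conv_lhs => rw [← hz]
  rw [ZMod.isUnit_iff_coprime, ZMod.isUnit_iff_coprime,
    Nat.coprime_pow_right_iff (by omega)]

lemma Nd_prime_pow {p : ℕ} (hp : p.Prime) {e : ℕ} (he : 1 ≤ e) :
    Nd (p^e) = (p^(e-1))^2 * Nd p := by
  classical
  set π := ZMod.castHom (dvd_pow_self p (by omega : e ≠ 0)) (ZMod p) with hπ
  have hπs : Function.Surjective π := ZMod.ringHom_surjective _
  let f : (ZMod (p^e) × ZMod (p^e)) →+ (ZMod p × ZMod p) :=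
    AddMonoidHom.prodMap π.toAddMonoidHom π.toAddMonoidHom
  have hfs : Function.Surjective f := Function.Surjective.prodMap hπs hπs
  have hcond : ∀ x : ZMod (p^e) × ZMod (p^e), IsUnit (nf x) ↔ IsUnit (nf (f x)) := by
    intro x
    have h1 : nf (f x) = π (nf x) := by simp [nf, f]
    rw [h1]
    exact isUnit_zmod_pow_iff hp he _
  have h2 : Nd (p^e) = Nat.card {x : ZMod (p^e) × ZMod (p^e) // IsUnit (nf (f x))} :=
    Nat.card_congr (Equiv.subtypeEquivRight hcond)
  rw [Nd] at h2 ⊢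
  rw [h2, card_subtype_comp f hfs (fun y => IsUnit (nf y))]
  have h3 : Nat.card {x : ZMod (p^e) × ZMod (p^e) // f x = 0} = (p^(e-1))^2 := by
    have he1 : ∀ x : ZMod (p^e) × ZMod (p^e), f x = 0 ↔ (π x.1 = 0 ∧ π x.2 = 0) := by
      intro x; rw [Prod.ext_iff]; rfl
    rw [Nat.card_congr ((Equiv.subtypeEquivRight he1).trans (Equiv.subtypeProdEquivProd (p := fun a => π a = 0) (q := fun b => π b = 0))),
      Nat.card_prod, card_ker_cast hp he, sq]
  rw [h3, Nd, mul_comm]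

def orSplit {α : Type*} (P Q : α → Prop) [DecidablePred P] :
    {x // P x ∨ Q x} ≃ {x // P x} ⊕ {x // Q x ∧ ¬ P x} where
  toFun x := if h : P x.1 then Sum.inl ⟨x.1, h⟩ else Sum.inr ⟨x.1, ⟨x.2.resolve_left h, h⟩⟩
  invFun s := match s with
    | Sum.inl x => ⟨x.1, Or.inl x.2⟩
    | Sum.inr x => ⟨x.1, Or.inr x.2.1⟩
  left_inv x := by by_cases h : P x.1 <;> simp [h]
  right_inv s := by
    rcases s with x | x
    · simp [x.2]
    · simp [x.2.2]

lemma root_iff {p : ℕ} [hpf : Fact p.Prime] (hp3 : p ≠ 3) :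
    (∃ r : ZMod p, r^2 + r + 1 = 0) ↔ p % 3 = 1 := by
  have hp := hpf.out
  constructor
  · rintro ⟨r, hr⟩
    have h1 : r ≠ 1 := by
      rintro rfl
      have : ((3:ℕ) : ZMod p) = 0 := by push_cast; linear_combination hr
      rw [ZMod.natCast_eq_zero_iff] at this
      exact hp3 ((Nat.prime_dvd_prime_iff_eq hp (by norm_num)).mp this)
    have h0 : r ≠ 0 := by
      rintro rfl
      simp at hr
    have hr3 : r^3 = 1 := by linear_combination (r - 1) * hr
    have hu : IsUnit r := isUnit_iff_ne_zero.mpr h0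
    have hu3 : hu.unit^3 = 1 := by
      ext; simp [hr3]
    have hord : orderOf hu.unit = 3 := by
      have hdvd := orderOf_dvd_of_pow_eq_one hu3
      have hne : orderOf hu.unit ≠ 1 := by
        intro h
        rw [orderOf_eq_one_iff] at h
        apply h1
        have := congrArg (Units.val) h
        simpa using this
      rcases (Nat.Prime.eq_one_or_self_of_dvd (by norm_num) _ hdvd) with h | h
      · exact absurd h hne
      · exact h
    have hcard : orderOf hu.unit ∣ Fintype.card (ZMod p)ˣ := orderOf_dvd_card
    rw [hord, ZMod.card_units_eq_totient, Nat.totient_prime hp] at hcard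
    have := hp.two_le
    omega
  · intro h
    have : Fact (Nat.Prime 3) := ⟨by norm_num⟩
    have hdvd : 3 ∣ Fintype.card (ZMod p)ˣ := by
      rw [ZMod.card_units_eq_totient, Nat.totient_prime hp]
      have := hp.two_le
      omega
    obtain ⟨u, hu⟩ := exists_prime_orderOf_dvd_card 3 hdvd
    refine ⟨u, ?_⟩
    have hu3 : (u : ZMod p)^3 = 1 := by
      have := pow_orderOf_eq_one u
      rw [hu] at this
      simpa using congrArg Units.val this
    have hne1 : (u : ZMod p) ≠ 1 := by
      intro h1
      have : u = 1 := Units.ext h1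
      rw [this, orderOf_one] at hu
      norm_num at hu
    have : ((u : ZMod p) - 1) * ((u:ZMod p)^2 + u + 1) = 0 := by linear_combination hu3
    rcases mul_eq_zero.mp this with h | h
    · exact absurd (by linear_combination h) hne1
    · exact h

lemma card_graph {p : ℕ} [hpf : Fact p.Prime] (c : ZMod p) :
    Nat.card {x : ZMod p × ZMod p // x.1 = c * x.2} = p := by
  have e : {x : ZMod p × ZMod p // x.1 = c * x.2} ≃ ZMod p :=
    { toFun := fun x => x.1.2
      invFun := fun b => ⟨(c*b, b), rfl⟩
      left_inv := fun x => Subtype.ext (Prod.ext x.2.symm rfl)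
      right_inv := fun b => rfl }
  rw [Nat.card_congr e, Nat.card_zmod]

lemma Nd_prime {p : ℕ} [hpf : Fact p.Prime] (hp3 : p ≠ 3) :
    Nd p = (p-1) * (if p % 3 = 1 then p - 1 else p + 1) := by
  classical
  have hp := hpf.out
  have hple := hp.two_le
  have hcardtot : Fintype.card (ZMod p × ZMod p) = p^2 := by
    rw [Fintype.card_prod, ZMod.card, sq]
  have hNd : Nd p = p^2 - Nat.card {x : ZMod p × ZMod p // nf x = 0} := by
    rw [Nd, Nat.card_congr (Equiv.subtypeEquivRight
      (fun x => isUnit_iff_ne_zero (a := nf x))), Nat.card_eq_fintype_card,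
      Nat.card_eq_fintype_card]
    rw [Fintype.card_subtype_compl, hcardtot]
  by_cases hroot : ∃ r : ZMod p, r^2 + r + 1 = 0
  · rw [if_pos ((root_iff hp3).mp hroot)]
    obtain ⟨r, hr⟩ := hroot
    have hr0 : r ≠ 0 := by rintro rfl; simp at hr
    have hr1 : r ≠ 1 := by
      rintro rfl
      have h3 : ((3:ℕ) : ZMod p) = 0 := by push_cast; linear_combination hr
      rw [ZMod.natCast_eq_zero_iff] at h3
      exact hp3 ((Nat.prime_dvd_prime_iff_eq hp (by norm_num)).mp h3)
    set c₁ : ZMod p := -r with hc₁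
    set c₂ : ZMod p := -(r^2) with hc₂
    have hcne : c₁ ≠ c₂ := by
      intro h
      have : r^2 = r := by rw [hc₁, hc₂] at h; linear_combination h
      rcases mul_eq_zero.mp (show r * (r - 1) = 0 by linear_combination this) with h' | h'
      · exact hr0 h'
      · exact hr1 (by linear_combination h')
    have hfac : ∀ x : ZMod p × ZMod p, nf x = 0 ↔ (x.1 = c₁ * x.2 ∨ x.1 = c₂ * x.2) := by
      intro x
      have : nf x = (x.1 - c₁ * x.2) * (x.1 - c₂ * x.2) := by
        simp only [nf, hc₁, hc₂]
        linear_combination (-(x.1*x.2)) * hr - x.2^2*(r-1)*hr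
      rw [this, mul_eq_zero, sub_eq_zero, sub_eq_zero]
    have hZ : Nat.card {x : ZMod p × ZMod p // nf x = 0} = p + (p - 1) := by
      rw [Nat.card_congr ((Equiv.subtypeEquivRight hfac).trans
        (orSplit (fun x : ZMod p × ZMod p => x.1 = c₁ * x.2)
          (fun x : ZMod p × ZMod p => x.1 = c₂ * x.2))), Nat.card_sum,
        card_graph]
      congr 1
      have e : {x : ZMod p × ZMod p // x.1 = c₂ * x.2 ∧ ¬ x.1 = c₁ * x.2} ≃
          {b : ZMod p // ¬ b = 0} :=
        { toFun := fun x => ⟨x.1.2, fun hb =>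
            x.2.2 (by rw [x.2.1, hb, mul_zero, mul_zero])⟩
          invFun := fun b => ⟨(c₂ * b.1, b.1), ⟨rfl, fun h =>
            b.2 (by
              by_contra hb
              exact hcne (mul_right_cancel₀ hb h.symm))⟩⟩
          left_inv := fun x => Subtype.ext (Prod.ext x.2.1.symm rfl)
          right_inv := fun b => rfl }
      rw [Nat.card_congr e, Nat.card_eq_fintype_card, Fintype.card_subtype_compl,
        ZMod.card, Fintype.card_subtype_eq]
    rw [hNd, hZ]
    have h1 : p + (p-1) ≤ p^2 := by
      calc p + (p-1) ≤ p + p := by omega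
        _ ≤ p^2 := by nlinarith
    zify [h1, (by omega : 1 ≤ p)]
    push_cast [(by omega : 1 ≤ p)]
    ring
  · have h31 : p % 3 ≠ 1 := fun h => hroot ((root_iff hp3).mpr h)
    rw [if_neg h31]
    have hzero : ∀ x : ZMod p × ZMod p, nf x = 0 ↔ x = (0, 0) := by
      intro x
      constructor
      · intro h
        by_cases h2 : x.2 = 0
        · have : x.1^2 = 0 := by rw [nf, h2] at h; linear_combination h
          have h1 : x.1 = 0 := by
            exact pow_eq_zero_iff (by norm_num) |>.mp this
          ext <;> simp [h1, h2]
        · exfalso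
          apply hroot
          have hinv : x.2 * x.2⁻¹ = 1 := mul_inv_cancel₀ h2
          refine ⟨-(x.1 * x.2⁻¹), ?_⟩
          rw [nf] at h
          linear_combination (x.2⁻¹^2) * h + (x.1*x.2⁻¹ - x.2*x.2⁻¹ - 1) * hinv
      · rintro rfl; simp [nf]
    have hZ : Nat.card {x : ZMod p × ZMod p // nf x = 0} = 1 := by
      rw [Nat.card_congr (Equiv.subtypeEquivRight hzero), Nat.card_eq_fintype_card,
        Fintype.card_subtype_eq]
    rw [hNd, hZ]
    have h1 : 1 ≤ p^2 := by nlinarith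
    zify [h1, (by omega : 1 ≤ p)]
    push_cast [(by omega : 1 ≤ p)]
    ring

lemma Nd_eq {d : ℕ} (hd : d ≠ 0) (h3 : Nat.Coprime d 3) :
    Nd d = d.totient * ∏ p ∈ d.primeFactors,
      p^(d.factorization p - 1) * (if p % 3 = 1 then p - 1 else p + 1) := by
  rw [Nat.multiplicative_factorization Nd Nd_mul Nd_one hd,
    Nat.totient_eq_prod_factorization hd, Finsupp.prod, Finsupp.prod,
    Nat.support_factorization, ← Finset.prod_mul_distrib]
  apply Finset.prod_congr rfl
  intro p hp
  have hpp : p.Prime := Nat.prime_of_mem_primeFactors hp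
  have : Fact p.Prime := ⟨hpp⟩
  have he : 1 ≤ d.factorization p :=
    hpp.factorization_pos_of_dvd hd (Nat.dvd_of_mem_primeFactors hp)
  have hp3 : p ≠ 3 := by
    rintro rfl
    have h := Nat.dvd_gcd (Nat.dvd_of_mem_primeFactors hp) (dvd_refl 3)
    rw [Nat.Coprime] at h3
    rw [h3] at h
    exact absurd h (by norm_num)
  rw [Nd_prime_pow hpp he, Nd_prime hp3]
  ring

end NF


/-- Let `𝒪 = ℤ[ω]` be the Eisenstein integers, i.e. the ring of integers of the cyclotomic field
`K = ℚ(ω)` for `ω` a primitive cube root of unity, and let `d` be a positive integer coprime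
to `3`. Then the quotient of `(𝒪/d𝒪)ˣ` by the image of `(ℤ/dℤ)ˣ` (the subgroup of units coming
from rational integers) is finite of cardinality
`d·Π_{p ∣ d}(1 − χ₃(p)/p) = Π_{pᵉ ∥ d} p^{e−1}(p − χ₃(p))`. -/
theorem stmt17 (K : Type*) [Field K] [NumberField K] [IsCyclotomicExtension {3} ℚ K]
    (d : ℕ) (hd : 0 < d) (h3 : Nat.Coprime d 3) :
    Nat.card
        ((NumberField.RingOfIntegers K ⧸
            Ideal.span {(d : NumberField.RingOfIntegers K)})ˣ ⧸
          Subgroup.closure {u : (NumberField.RingOfIntegers K ⧸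
              Ideal.span {(d : NumberField.RingOfIntegers K)})ˣ |
            ∃ k : ℤ, (u : NumberField.RingOfIntegers K ⧸
              Ideal.span {(d : NumberField.RingOfIntegers K)}) = Int.cast k})
      = ∏ p ∈ d.primeFactors, p ^ (d.factorization p - 1) *
          (if p % 3 = 1 then p - 1 else p + 1) ∧
    ((∏ p ∈ d.primeFactors, p ^ (d.factorization p - 1) *
          (if p % 3 = 1 then p - 1 else p + 1) : ℕ) : ℚ)
      = d * ∏ p ∈ d.primeFactors,
          (1 - (if p % 3 = 1 then 1 else -1) / (p : ℚ)) := by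
  classical
  haveI : NeZero d := ⟨hd.ne'⟩
  haveI : Fact (Nat.Prime ((3:ℕ+):ℕ)) := ⟨by norm_num⟩
  constructor
  · -- main cardinality computation
    set O := NumberField.RingOfIntegers K with hO
    set I : Ideal O := Ideal.span {(d : O)} with hI
    set R := O ⧸ I with hR
    -- the power basis
    have hζ : IsPrimitiveRoot (IsCyclotomicExtension.zeta 3 ℚ K) ((3:ℕ+):ℕ) :=
      IsCyclotomicExtension.zeta_spec 3 ℚ K
    set B := IsPrimitiveRoot.integralPowerBasis (n := 3) hζ with hB
    have hdim : B.dim = 2 := by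
      rw [IsPrimitiveRoot.integralPowerBasis_dim (n := 3) hζ]
      rfl
    set η : O := B.gen with hη'
    have hη : η^2 + η + 1 = 0 := by
      apply NumberField.RingOfIntegers.coe_injective
      have hcoe : algebraMap O K η = IsCyclotomicExtension.zeta 3 ℚ K := by
        rw [hη', hB, IsPrimitiveRoot.integralPowerBasis_gen (n := 3) hζ]; rfl
      have hg := hζ.geom_sum_eq_zero (by norm_num)
      rw [show ((3:ℕ+):ℕ) = 3 from rfl] at hg
      rw [Finset.sum_range_succ, Finset.sum_range_succ, Finset.sum_range_one] at hg
      rw [map_zero, map_add, map_add, map_pow, map_one, hcoe]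
      linear_combination hg
    set bas : Module.Basis (Fin 2) ℤ O := B.basis.reindex (finCongr hdim) with hbas
    have hbas0 : bas 0 = 1 := by
      rw [hbas, Module.Basis.reindex_apply, PowerBasis.coe_basis]
      simp
    have hbas1 : bas 1 = η := by
      rw [hbas, Module.Basis.reindex_apply, PowerBasis.coe_basis]
      simp
      rfl
    -- decomposition of elements
    have hdec : ∀ x : O, x = ((bas.repr x 0 : ℤ) : O) + ((bas.repr x 1 : ℤ) : O) * η := by
      intro x
      conv_lhs => rw [← bas.sum_repr x]
      rw [Fin.sum_univ_two, hbas0, hbas1]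
      push_cast
      rw [zsmul_eq_mul, zsmul_eq_mul, mul_one]
    -- membership in the ideal via coordinates
    have hmem : ∀ x : O, x ∈ I ↔ ((d:ℤ) ∣ bas.repr x 0 ∧ (d:ℤ) ∣ bas.repr x 1) := by
      intro x
      rw [hI, Ideal.mem_span_singleton]
      constructor
      · rintro ⟨y, rfl⟩
        have : (d:O) * y = ((d:ℤ) : O) * y := by push_cast; ring
        rw [this, ← zsmul_eq_mul]
        rw [map_smul]
        exact ⟨⟨bas.repr y 0, rfl⟩, ⟨bas.repr y 1, rfl⟩⟩
      · rintro ⟨⟨r₀, h₀⟩, ⟨r₁, h₁⟩⟩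
        refine ⟨(r₀ : O) + (r₁ : O) * η, ?_⟩
        conv_lhs => rw [hdec x]
        rw [h₀, h₁]
        push_cast
        ring
    -- characteristic
    haveI hchar : CharP R d := by
      constructor
      intro a
      have h1 : ((a:ℕ) : R) = Ideal.Quotient.mk I (((a:ℕ) : O)) := (map_natCast (Ideal.Quotient.mk I) a).symm
      rw [h1, Ideal.Quotient.eq_zero_iff_mem, hmem]
      have hra : bas.repr ((a:ℕ) : O) = (a:ℤ) • bas.repr (1 : O) := by
        rw [← map_smul]
        congr 1
        rw [zsmul_eq_mul, mul_one]
        push_cast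
        ring
      have hr1 : bas.repr (1 : O) = Finsupp.single 0 1 := by
        rw [← hbas0]; exact bas.repr_self 0
      rw [hra, hr1]
      simp only [Finsupp.smul_apply, Finsupp.single_apply]
      norm_num
      constructor
      · intro h; exact_mod_cast h
      · intro h; exact_mod_cast h
    set ι : ZMod d →+* R := ZMod.castHom dvd_rfl R with hι
    set θ : R := Ideal.Quotient.mk I η with hθ'
    have hθ : θ^2 + θ + 1 = 0 := by
      rw [hθ']
      have : ((Ideal.Quotient.mk I) η)^2 + (Ideal.Quotient.mk I) η + 1
          = Ideal.Quotient.mk I (η^2 + η + 1) := by rw [map_add, map_add, map_pow, map_one]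
      rw [this, hη, map_zero]
    set ψ : ZMod d × ZMod d → R := fun y => ι y.1 + ι y.2 * θ with hψ
    -- ψ is surjective
    have hsurj : Function.Surjective ψ := by
      intro x
      obtain ⟨z, rfl⟩ := Ideal.Quotient.mk_surjective (I := I) x
      refine ⟨(((bas.repr z 0 : ℤ) : ZMod d), ((bas.repr z 1 : ℤ) : ZMod d)), ?_⟩
      rw [hψ]
      simp only [map_intCast]
      conv_rhs => rw [hdec z]
      push_cast
      rfl
    -- ψ of integer pairs
    have hψint : ∀ k₀ k₁ : ℤ, ψ ((k₀ : ZMod d), (k₁ : ZMod d))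
        = Ideal.Quotient.mk I ((k₀ : O) + (k₁ : O) * η) := by
      intro k₀ k₁
      rw [hψ]
      simp only [map_intCast]
      push_cast
      rfl
    -- ψ is injective
    have hinj : Function.Injective ψ := by
      have hzero : ∀ y : ZMod d × ZMod d, ψ y = 0 → y = 0 := by
        intro y hy
        obtain ⟨k₀, hk₀⟩ := ZMod.intCast_surjective (n := d) y.1
        obtain ⟨k₁, hk₁⟩ := ZMod.intCast_surjective (n := d) y.2
        have hy' : ψ ((k₀ : ZMod d), (k₁ : ZMod d)) = 0 := by rw [hk₀, hk₁]; exact hy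
        rw [hψint] at hy'
        rw [Ideal.Quotient.eq_zero_iff_mem, hmem] at hy'
        replace hy := hy'
        have hrep : bas.repr ((k₀ : O) + (k₁ : O) * η) = Finsupp.single 0 k₀ + Finsupp.single 1 k₁ := by
          have e0 : (k₀ : O) = k₀ • bas 0 := by rw [hbas0, zsmul_eq_mul, mul_one]
          have e1 : (k₁ : O) * η = k₁ • bas 1 := by rw [hbas1, zsmul_eq_mul]
          rw [e0, e1, map_add, map_smul, map_smul, bas.repr_self, bas.repr_self]
          ext i
          simp [Finsupp.single_apply]
        rw [hrep] at hy
        simp only [Finsupp.add_apply, Finsupp.single_apply] at hy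
        norm_num at hy
        have h0 : (d:ℤ) ∣ k₀ := hy.1
        have h1 : (d:ℤ) ∣ k₁ := hy.2
        have : y.1 = 0 ∧ y.2 = 0 := by
          constructor
          · rw [← hk₀, ZMod.intCast_zmod_eq_zero_iff_dvd]; exact_mod_cast h0
          · rw [← hk₁, ZMod.intCast_zmod_eq_zero_iff_dvd]; exact_mod_cast h1
        exact Prod.ext this.1 this.2
      intro y y' h
      have : ψ (y - y') = 0 := by
        rw [hψ]
        simp only [Prod.fst_sub, Prod.snd_sub, map_sub]
        rw [hψ] at h
        simp only at h
        linear_combination h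
      have := hzero _ this
      have := sub_eq_zero.mp (show y - y' = 0 from this)
      exact this
    -- multiplication formula
    have hmul : ∀ y z : ZMod d × ZMod d,
        ψ y * ψ z = ψ (y.1*z.1 - y.2*z.2, y.1*z.2 + y.2*z.1 - y.2*z.2) := by
      intro y z
      rw [hψ]
      simp only [map_sub, map_add, map_mul]
      linear_combination (ι y.2 * ι z.2) * hθ
    -- unit characterization
    have hunit : ∀ y : ZMod d × ZMod d, IsUnit (ψ y) ↔ IsUnit (nf y) := by
      intro y
      have key : ψ y * ψ (y.1 - y.2, -y.2) = ψ (nf y, 0) := by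
        rw [hmul]
        apply congrArg ψ
        apply Prod.ext
        · show _ = nf y; rw [nf]; ring
        · show _ = (0 : ZMod d); ring
      have hψι : ∀ c : ZMod d, ψ (c, 0) = ι c := by
        intro c; rw [hψ]; simp
      constructor
      · intro h
        obtain ⟨z, hz⟩ := hsurj (↑h.unit⁻¹)
        have h1 : ψ y * ψ z = ψ (1, 0) := by
          rw [hz, hψι, map_one]
          exact h.unit.mul_inv
        rw [hmul] at h1
        have h2 := hinj h1
        have h3 : nf y * nf z = 1 := by
          have := nf_mul y z
          rw [h2] at this
          rw [← this]
          rw [nf]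
          ring
        exact IsUnit.of_mul_eq_one _ h3
      · intro h
        have h1 : IsUnit (ι (nf y)) := h.map ι
        rw [← hψι, ← key] at h1
        exact isUnit_of_mul_isUnit_left h1
    -- card of units
    haveI : Finite R := Finite.of_surjective ψ hsurj
    have hcardU : Nat.card Rˣ = Nd d := by
      rw [Nd]
      have e1 : Rˣ ≃ {x : R // IsUnit x} :=
        (Submonoid.unitsTypeEquivIsUnitSubmonoid (M := R)).toEquiv.trans
          (Equiv.subtypeEquivRight (fun x => IsUnit.mem_submonoid_iff x))
      have e2 : {y : ZMod d × ZMod d // IsUnit (nf y)} ≃ {x : R // IsUnit x} :=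
        Equiv.subtypeEquiv (Equiv.ofBijective ψ ⟨hinj, hsurj⟩) (fun y => (hunit y).symm)
      exact Nat.card_congr (e1.trans e2.symm)
    -- the subgroup
    set j : (ZMod d)ˣ →* Rˣ := Units.map (ι : ZMod d →* R) with hj
    have hιinj : Function.Injective ι := by
      intro a b hab
      have : ψ (a, 0) = ψ (b, 0) := by
        rw [hψ]; simp only; rw [hab]
      have := hinj this
      exact congrArg Prod.fst this
    have hS : {u : Rˣ | ∃ k : ℤ, (u : R) = Int.cast k} = ↑j.range := by
      ext u
      simp only [Set.mem_setOf_eq, SetLike.mem_coe, MonoidHom.mem_range]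
      constructor
      · rintro ⟨k, hk⟩
        have hκ : IsUnit ((k : ZMod d)) := by
          have h1 : IsUnit (ψ ((k : ZMod d), 0)) := by
            rw [hψ]
            simp only [map_intCast, map_zero, zero_mul, add_zero]
            rw [← hk]
            exact u.isUnit
          have h2 := (hunit _).mp h1
          have h2' : IsUnit ((k:ZMod d)^2) := by simpa [nf] using h2
          exact (isUnit_pow_iff (by norm_num)).mp h2'
        refine ⟨hκ.unit, ?_⟩
        apply Units.ext
        rw [hj]
        show ι ↑hκ.unit = ↑u
        rw [IsUnit.unit_spec, map_intCast, ← hk]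
      · rintro ⟨v, rfl⟩
        obtain ⟨k, hk⟩ := ZMod.intCast_surjective (n := d) (↑v : ZMod d)
        refine ⟨k, ?_⟩
        show ι ↑v = _
        rw [← hk, map_intCast]
    have hjinj : Function.Injective j := Units.map_injective hιinj
    have hclosure : Subgroup.closure {u : Rˣ | ∃ k : ℤ, (u : R) = Int.cast k} = j.range := by
      rw [hS, Subgroup.closure_eq]
    have hcardH : Nat.card (Subgroup.closure {u : Rˣ | ∃ k : ℤ, (u : R) = Int.cast k}) = d.totient := by
      rw [hclosure, Nat.card_congr (MonoidHom.ofInjective hjinj).toEquiv.symm,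
        Nat.card_eq_fintype_card, ZMod.card_units_eq_totient]
    -- assemble
    have hNd := Nd_eq hd.ne' h3
    set T := ∏ p ∈ d.primeFactors, p ^ (d.factorization p - 1) *
          (if p % 3 = 1 then p - 1 else p + 1) with hT
    have hkey := Subgroup.card_mul_index (Subgroup.closure {u : Rˣ | ∃ k : ℤ, (u : R) = Int.cast k})
    rw [hcardH, hcardU, hNd] at hkey
    have htpos : 0 < d.totient := Nat.totient_pos.mpr hd
    exact Nat.eq_of_mul_eq_mul_left htpos hkey
  · -- the rational identity
    have hd' : d ≠ 0 := hd.ne'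
    rw [Nat.cast_prod]
    have hfd : (d:ℚ) = ∏ p ∈ d.primeFactors, (p:ℚ) ^ (d.factorization p) := by
      conv_lhs => rw [← Nat.factorization_prod_pow_eq_self hd']
      rw [Finsupp.prod, Nat.support_factorization]
      push_cast
      rfl
    rw [hfd, ← Finset.prod_mul_distrib]
    apply Finset.prod_congr rfl
    intro p hp
    have hpp := Nat.prime_of_mem_primeFactors hp
    have hp2 := hpp.two_le
    have he : 1 ≤ d.factorization p :=
      hpp.factorization_pos_of_dvd hd' (Nat.dvd_of_mem_primeFactors hp)
    have hpq : (p:ℚ) ≠ 0 := Nat.cast_ne_zero.mpr (by omega)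
    have hpow : (p:ℚ)^(d.factorization p) = (p:ℚ)^(d.factorization p - 1) * p := by
      conv_lhs => rw [show d.factorization p = (d.factorization p - 1) + 1 by omega]
      rw [pow_succ]
    by_cases h1 : p % 3 = 1
    · rw [if_pos h1, if_pos h1]
      push_cast [Nat.cast_sub (by omega : 1 ≤ p)]
      rw [hpow]
      field_simp
    · rw [if_neg h1, if_neg h1]
      push_cast
      rw [hpow]
      field_simp
      ring
end
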